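/- arXiv:2110.12533 — 4 statements merged into one kernel-verified Lean document; each statement's English description precedes it below -/
import Mathlib

section
/- Fix an iteration index k ≥ 0 and a regularization parameter t_k > 0. For each i = 1,…,m let B_{k,i} be a (possibly empty) subset of {l ∈ ℤ : 0 ≤ l ≤ k}, let x_0, x_1, …, x_k be points of X, and for each i and each l ∈ B_{k,i} let g_i(x_{k−l}) be a subgradient of f_i at x_{k−l}. Define for each i the model ĥ_{k,i}(x) = max_{l ∈ B_{k,i}} [ f_i(x_{k−l}) + ⟨g_i(x_{k−l}), x − x_{k−l}⟩ ] if B_{k,i} ≠ ∅, and ĥ_{k,i}(x) = 0 if B_{k,i} = ∅, and set f̆_k(x) = Σ_{i=1}^m ĥ_{k,i}(x) + (1/(2 t_k))‖x − x_k‖². If x_{k+1} ∈ X minimizes f̆_k over X, then there exist nonnegative weights α_{k,i,l} ≥ 0 (i = 1,…,m, l ∈ B_{k,i}) with Σ_{l ∈ B_{k,i}} α_{k,i,l} = 1 whenever B_{k,i} ≠ ∅, such that x_{k+1} = P_X( x_k − t_k Σ_{i=1}^m Σ_{l ∈ B_{k,i}} α_{k,i,l} g_i(x_{k−l}) ), where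 an empty sum is interpreted as 0. -/
/-!
Minimality of `xnext` gives, for every `y ∈ X`, the first-order inequality
`⟪(x k - xnext) / tk, y - xnext⟫ ≤ ⟪s, y - xnext⟫` for some `s` in the polytope `D` of convex
combinations of the cutting-plane slopes: take for `s` a vertex of `D` maximising
`⟪·, y - xnext⟫`. As `D` is compact and convex and the pairing is bilinear, Sion's minimax
theorem lets one `s ∈ D` serve all `y ∈ X` at once, and that is the variational inequality
characterising `xnext = P (x k - tk • s)`.
-/

open RealInnerProductSpace Filter Topology Set Pointwise

section Minimax

variable {E F : Type*} [TopologicalSpace E] [AddCommGroup E] [Module ℝ E]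
  [IsTopologicalAddGroup E] [ContinuousSMul ℝ E] [TopologicalSpace F] [AddCommGroup F]
  [Module ℝ F] [IsTopologicalAddGroup F] [ContinuousSMul ℝ F]

theorem Sion.exists_forall_le_iSup₂_iInf₂ {D : Set E} {S : Set F} {f : E → F → EReal}
    (hDne : D.Nonempty) (hDc : Convex ℝ D) (hDk : IsCompact D)
    (hf_lsc : ∀ z ∈ S, LowerSemicontinuousOn (fun s => f s z) D)
    (hf_quasiconvex : ∀ z ∈ S, QuasiconvexOn ℝ D fun s => f s z) (hS : Convex ℝ S)
    (hf_usc : ∀ s ∈ D, UpperSemicontinuousOn (f s) S)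
    (hf_quasiconcave : ∀ s ∈ D, QuasiconcaveOn ℝ S (f s)) :
    ∃ s ∈ D, ∀ z ∈ S, f s z ≤ ⨆ z ∈ S, ⨅ s ∈ D, f s z := by
  have hsup_lsc : LowerSemicontinuousOn (fun s => ⨆ z ∈ S, f s z) D := fun s hs =>
    lowerSemicontinuousWithinAt_iSup fun z =>
      lowerSemicontinuousWithinAt_iSup fun hz => hf_lsc z hz s hs
  obtain ⟨s, hs, hsmin⟩ := hsup_lsc.exists_isMinOn hDne hDk
  refine ⟨s, hs, fun z hz => ?_⟩
  calc f s z ≤ ⨆ z ∈ S, f s z := le_iSup₂ (f := fun z _ => f s z) z hz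
    _ ≤ ⨅ s ∈ D, ⨆ z ∈ S, f s z := le_iInf₂ fun s' hs' => hsmin hs'
    _ = ⨆ z ∈ S, ⨅ s ∈ D, f s z :=
      Sion.minimax' hDne hDc hDk hf_lsc hf_quasiconvex hS hf_usc hf_quasiconcave

end Minimax

section InnerProductSpace

variable {E : Type*} [NormedAddCommGroup E] [InnerProductSpace ℝ E]

theorem eq_of_inner_sub_nonpos_of_norm_sub_le {X : Set E} {u p q : E}
    (hp : ∀ y ∈ X, ⟪u - p, y - p⟫ ≤ 0) (hq : q ∈ X) (hqp : ‖u - q‖ ≤ ‖u - p‖) : q = p := by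
  have hexpand : ‖u - q‖ ^ 2 = ‖u - p‖ ^ 2 - 2 * ⟪u - p, q - p⟫ + ‖q - p‖ ^ 2 := by
    rw [show u - q = (u - p) - (q - p) by abel, norm_sub_sq_real]
  have hsq : ‖u - q‖ ^ 2 ≤ ‖u - p‖ ^ 2 := pow_le_pow_left₀ (norm_nonneg _) hqp 2
  have hqp0 : ‖q - p‖ ^ 2 ≤ 0 := by linarith [hp q hq]
  rw [← sub_eq_zero, ← norm_eq_zero]
  exact (pow_eq_zero_iff two_ne_zero).1 (le_antisymm hqp0 (sq_nonneg _))

theorem eq_proj_sub_smul_of_forall_inner_le {X : Set E} {P : E → E}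
    (hP : ∀ u, P u ∈ X ∧ ∀ y ∈ X, ‖u - P u‖ ≤ ‖u - y‖) {c x s : E} {t : ℝ} (ht : 0 < t)
    (hx : x ∈ X) (hs : ∀ y ∈ X, ⟪t⁻¹ • (c - x), y - x⟫ ≤ ⟪s, y - x⟫) : x = P (c - t • s) := by
  have hvi : ∀ y ∈ X, ⟪c - t • s - x, y - x⟫ ≤ 0 := by
    intro y hy
    have hv : c - t • s - x = t • (t⁻¹ • (c - x) - s) := by
      rw [smul_sub, smul_inv_smul₀ ht.ne']
      abel
    rw [hv, real_inner_smul_left, inner_sub_left]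
    exact mul_nonpos_of_nonneg_of_nonpos ht.le (sub_nonpos.2 (hs y hy))
  exact (eq_of_inner_sub_nonpos_of_norm_sub_le hvi (hP _).1 ((hP _).2 x hx)).symm

theorem inner_sub_le_of_isMinOn_add_sq_norm {X : Set E} (hX : Convex ℝ X) {H : E → ℝ}
    {c x y : E} {t q : ℝ} (ht : 0 < t) (hx : x ∈ X) (hy : y ∈ X)
    (hmin : IsMinOn (fun z => H z + 1 / (2 * t) * ‖z - c‖ ^ 2) X x)
    (hH : ∀ ε, 0 ≤ ε → H (x + ε • (y - x)) ≤ H x + ε * q) :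
    ⟪t⁻¹ • (c - x), y - x⟫ ≤ q := by
  set d := y - x
  have hstep : ∀ ε ∈ Ioc (0 : ℝ) 1, ⟪c - x, d⟫ ≤ t * q + ε * (‖d‖ ^ 2 / 2) := by
    rintro ε ⟨hε, hε1⟩
    have hmem : x + ε • d ∈ X := hX.add_smul_sub_mem hx hy ⟨hε.le, hε1⟩
    have hle := isMinOn_iff.1 hmin _ hmem
    have hnorm : ‖x + ε • d - c‖ ^ 2 = ‖x - c‖ ^ 2 + 2 * ε * ⟪x - c, d⟫ + ε ^ 2 * ‖d‖ ^ 2 := by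
      rw [show x + ε • d - c = (x - c) + ε • d by abel, norm_add_sq_real, real_inner_smul_right,
        norm_smul, Real.norm_of_nonneg hε.le]
      ring
    have hmul : 0 ≤ ε * (t * q + ⟪x - c, d⟫ + ε * (‖d‖ ^ 2 / 2)) := by
      have := hH ε hε.le
      simp only [hnorm] at hle
      field_simp at hle ⊢
      nlinarith
    have hcx : ⟪c - x, d⟫ = -⟪x - c, d⟫ := by rw [← inner_neg_left, neg_sub]
    linarith [nonneg_of_mul_nonneg_right hmul hε]
  have hlim : Tendsto (fun ε : ℝ => t * q + ε * (‖d‖ ^ 2 / 2)) (𝓝[>] 0) (𝓝 (t * q)) := by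
    have : Continuous fun ε : ℝ => t * q + ε * (‖d‖ ^ 2 / 2) := by fun_prop
    simpa using (this.tendsto 0).mono_left nhdsWithin_le_nhds
  have hcd : ⟪c - x, d⟫ ≤ t * q :=
    ge_of_tendsto hlim (eventually_of_mem (Ioc_mem_nhdsGT one_pos) hstep)
  rw [real_inner_smul_left]
  calc t⁻¹ * ⟪c - x, d⟫ ≤ t⁻¹ * (t * q) := by gcongr
    _ = q := by field_simp

theorem exists_forall_inner_le_of_forall_exists_inner_le {D S : Set E}
    (hDc : Convex ℝ D) (hDk : IsCompact D) (hS : Convex ℝ S) (hSne : S.Nonempty) {v : E}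
    (h : ∀ z ∈ S, ∃ s ∈ D, ⟪v, z⟫ ≤ ⟪s, z⟫) :
    ∃ s ∈ D, ∀ z ∈ S, ⟪v, z⟫ ≤ ⟪s, z⟫ := by
  have hDne : D.Nonempty := by
    obtain ⟨z, hz⟩ := hSne
    obtain ⟨s, hs, -⟩ := h z hz
    exact ⟨s, hs⟩
  -- The pairing is taken in `EReal`, where its supremum over the unbounded `S` exists.
  let F : E → E → EReal := fun s z => Real.toEReal ⟪v - s, z⟫
  have hcoe : Monotone Real.toEReal := fun _ _ => EReal.coe_le_coe_iff.2
  have hF_lsc : ∀ z ∈ S, LowerSemicontinuousOn (fun s => F s z) D := fun z _ =>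
    (continuous_coe_real_ereal.comp (f := fun s => ⟪v - s, z⟫)
      (by fun_prop)).lowerSemicontinuous.lowerSemicontinuousOn _
  have hF_quasiconvex : ∀ z ∈ S, QuasiconvexOn ℝ D (fun s => F s z) := by
    intro z _
    refine QuasiconvexOn.monotone_comp (g := Real.toEReal) (f := fun s => ⟪v - s, z⟫) hcoe
      (ConvexOn.quasiconvexOn ?_)
    have hF : (fun s => ⟪v - s, z⟫) = (fun _ => ⟪v, z⟫) - ⇑(innerSL ℝ z).toLinearMap := by
      ext s
      simp [inner_sub_left, real_inner_comm]
    rw [hF]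
    exact (convexOn_const _ hDc).sub ((innerSL ℝ z).toLinearMap.concaveOn hDc)
  have hF_usc : ∀ s ∈ D, UpperSemicontinuousOn (F s) S := fun s _ =>
    (continuous_coe_real_ereal.comp (f := fun z => ⟪v - s, z⟫)
      (by fun_prop)).upperSemicontinuous.upperSemicontinuousOn _
  have hF_quasiconcave : ∀ s ∈ D, QuasiconcaveOn ℝ S (F s) := fun s _ =>
    QuasiconcaveOn.monotone_comp (g := Real.toEReal) hcoe
      ((innerSL ℝ (v - s)).toLinearMap.concaveOn hS).quasiconcaveOn
  have hvalue : ⨆ z ∈ S, ⨅ s ∈ D, F s z ≤ 0 := iSup₂_le fun z hz => by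
    obtain ⟨s, hs, hle⟩ := h z hz
    exact iInf₂_le_of_le s hs (EReal.coe_nonpos.2 (by rw [inner_sub_left]; linarith))
  obtain ⟨s, hs, hsaddle⟩ := Sion.exists_forall_le_iSup₂_iInf₂ hDne hDc hDk hF_lsc
    hF_quasiconvex hS hF_usc hF_quasiconcave
  refine ⟨s, hs, fun z hz => ?_⟩
  have hFsz := (hsaddle z hz).trans hvalue
  rw [EReal.coe_nonpos, inner_sub_left] at hFsz
  linarith

end InnerProductSpace

theorem Finset.sum_dite_mem {κ M : Type*} [AddCommMonoid M] [DecidableEq κ] (s : Finset κ)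
    (f : s → M) : ∑ l ∈ s, (if h : l ∈ s then f ⟨l, h⟩ else 0) = ∑ l : s, f l := by
  rw [← Finset.sum_coe_sort]
  simp

section CuttingPlaneModel

variable {E : Type*} [NormedAddCommGroup E] [InnerProductSpace ℝ E] {ι κ : Type*}

def supOrZero (s : Finset κ) (φ : κ → ℝ) : ℝ :=
  if h : s.Nonempty then s.sup' h φ else 0

def convexWeights (B : ι → Finset κ) : Set ((i : ι) → B i → ℝ) :=
  {w | ∀ i, (B i).Nonempty → w i ∈ stdSimplex ℝ (B i)}

theorem convex_convexWeights (B : ι → Finset κ) : Convex ℝ (convexWeights B) :=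
  fun _ hw _ hw' _ _ ha hb hab i hi => convex_stdSimplex ℝ _ (hw i hi) (hw' i hi) ha hb hab

theorem isCompact_convexWeights (B : ι → Finset κ) : IsCompact (convexWeights B) := by
  have : convexWeights B = univ.pi fun i => {p | (B i).Nonempty → p ∈ stdSimplex ℝ (B i)} := by
    ext w
    simp [convexWeights]
  rw [this]
  refine isCompact_univ_pi fun i => ?_
  by_cases h : (B i).Nonempty
  · simpa [h] using isCompact_stdSimplex ℝ (B i)
  · have : IsEmpty (B i) := by simpa [Finset.not_nonempty_iff_eq_empty] using h
    exact Set.Subsingleton.isCompact fun _ _ _ _ => Subsingleton.elim _ _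

theorem exists_supOrZero_add_smul_le {s : Finset κ} {φ : κ → E → ℝ} {G : κ → E}
    (hφ : ∀ l z w, φ l (z + w) = φ l z + ⟪G l, w⟫) (d : E) :
    ∃ p : s → ℝ, (s.Nonempty → p ∈ stdSimplex ℝ s) ∧ ∀ z, ∀ ε, 0 ≤ ε →
      supOrZero s (fun l => φ l (z + ε • d)) ≤
        supOrZero s (fun l => φ l z) + ε * ⟪∑ l : s, p l • G l, d⟫ := by
  classical
  by_cases hs : s.Nonempty
  · obtain ⟨l₀, hl₀, hmax⟩ := s.exists_max_image (fun l => ⟪G l, d⟫) hs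
    refine ⟨Pi.single ⟨l₀, hl₀⟩ 1, fun _ => single_mem_stdSimplex ℝ _, fun z ε hε => ?_⟩
    simp only [supOrZero, dif_pos hs, Pi.single_apply, ite_smul, one_smul, zero_smul,
      Finset.sum_ite_eq', Finset.mem_univ, if_true]
    refine Finset.sup'_le _ _ fun l hl => ?_
    rw [hφ, real_inner_smul_right]
    have := mul_le_mul_of_nonneg_left (hmax l hl) hε
    linarith [Finset.le_sup' (fun l => φ l z) hl]
  · refine ⟨0, fun h => absurd h hs, fun z ε _ => ?_⟩
    simp [supOrZero, hs]

variable [Fintype ι]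

def cuttingPlaneModel (B : ι → Finset κ) (φ : ι → κ → E → ℝ) (z : E) : ℝ :=
  ∑ i, supOrZero (B i) fun l => φ i l z

def weightedSum (B : ι → Finset κ) (G : ι → κ → E) : ((i : ι) → B i → ℝ) →ₗ[ℝ] E where
  toFun w := ∑ i, ∑ l : B i, w i l • G i l
  map_add' w w' := by simp only [Pi.add_apply, add_smul, Finset.sum_add_distrib]
  map_smul' c w := by
    simp only [Pi.smul_apply, smul_eq_mul, mul_smul, Finset.smul_sum, RingHom.id_apply]

theorem weightedSum_apply (B : ι → Finset κ) (G : ι → κ → E) (w : (i : ι) → B i → ℝ) :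
    weightedSum B G w = ∑ i, ∑ l : B i, w i l • G i l :=
  rfl

theorem exists_mem_convexWeights_cuttingPlaneModel_add_smul_le {B : ι → Finset κ}
    {φ : ι → κ → E → ℝ} {G : ι → κ → E}
    (hφ : ∀ i l z w, φ i l (z + w) = φ i l z + ⟪G i l, w⟫) (d : E) :
    ∃ w ∈ convexWeights B, ∀ z, ∀ ε, 0 ≤ ε →
      cuttingPlaneModel B φ (z + ε • d) ≤
        cuttingPlaneModel B φ z + ε * ⟪weightedSum B G w, d⟫ := by
  choose p hp hle using fun i => exists_supOrZero_add_smul_le (s := B i) (hφ i) d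
  refine ⟨p, hp, fun z ε hε => ?_⟩
  rw [cuttingPlaneModel, cuttingPlaneModel, weightedSum_apply, sum_inner, Finset.mul_sum,
    ← Finset.sum_add_distrib]
  exact Finset.sum_le_sum fun i _ => hle i z ε hε

theorem exists_weights_of_mem_convexWeights {B : ι → Finset κ} (G : ι → κ → E)
    {w : (i : ι) → B i → ℝ} (hw : w ∈ convexWeights B) :
    ∃ α : ι → κ → ℝ, (∀ i l, 0 ≤ α i l) ∧ (∀ i, (B i).Nonempty → ∑ l ∈ B i, α i l = 1) ∧
      ∑ i, ∑ l ∈ B i, α i l • G i l = weightedSum B G w := by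
  classical
  refine ⟨fun i l => if h : l ∈ B i then w i ⟨l, h⟩ else 0, fun i l => ?_, fun i hi => ?_, ?_⟩
  · dsimp only
    split_ifs with h
    · exact (hw i ⟨l, h⟩).1 _
    · exact le_rfl
  · rw [Finset.sum_dite_mem (B i) (w i)]
    exact (hw i hi).2
  · rw [weightedSum_apply]
    refine Finset.sum_congr rfl fun i _ => ?_
    rw [← Finset.sum_dite_mem (B i) fun l => w i l • G i l]
    refine Finset.sum_congr rfl fun l hl => ?_
    simp [hl]

end CuttingPlaneModel

theorem incremental_cp_minimizer_is_projected_step_general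
    (n m : ℕ)
    (X : Set (EuclideanSpace ℝ (Fin n)))
    (hXconvex : Convex ℝ X)
    (f : Fin m → EuclideanSpace ℝ (Fin n) → ℝ)
    -- `P` is the Euclidean projection onto `X`
    (P : EuclideanSpace ℝ (Fin n) → EuclideanSpace ℝ (Fin n))
    (hP : ∀ u, P u ∈ X ∧ ∀ y ∈ X, ‖u - P u‖ ≤ ‖u - y‖)
    -- the iteration index `k` and the regularization parameter `tk > 0`
    (k : ℕ) (tk : ℝ) (htk : 0 < tk)
    -- the previous points `x 0, …, x k`, points of `X`
    (x : ℕ → EuclideanSpace ℝ (Fin n))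
    -- the index sets `B i ⊆ {0, …, k}` (possibly empty)
    (B : Fin m → Finset ℕ)
    (g : Fin m → ℕ → EuclideanSpace ℝ (Fin n))
    -- `xnext` minimizes the regularized model `f̆ k` over `X`
    (xnext : EuclideanSpace ℝ (Fin n)) (hxnextX : xnext ∈ X)
    (hmin : ∀ z ∈ X,
      ((∑ i : Fin m,
          if hne : (B i).Nonempty then
            (B i).sup' hne
              (fun l => f i (x (k - l)) + ⟪g i (k - l), xnext - x (k - l)⟫)
          else 0) +
        1 / (2 * tk) * ‖xnext - x k‖ ^ 2) ≤
      ((∑ i : Fin m,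
          if hne : (B i).Nonempty then
            (B i).sup' hne
              (fun l => f i (x (k - l)) + ⟪g i (k - l), z - x (k - l)⟫)
          else 0) +
        1 / (2 * tk) * ‖z - x k‖ ^ 2)) :
    ∃ α : Fin m → ℕ → ℝ,
      (∀ i l, 0 ≤ α i l) ∧
      (∀ i, (B i).Nonempty → ∑ l ∈ B i, α i l = 1) ∧
      xnext = P (x k - tk • ∑ i : Fin m, ∑ l ∈ B i, α i l • g i (k - l)) := by
  set φ : Fin m → ℕ → EuclideanSpace ℝ (Fin n) → ℝ :=
    fun i l z => f i (x (k - l)) + ⟪g i (k - l), z - x (k - l)⟫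
  set G : Fin m → ℕ → EuclideanSpace ℝ (Fin n) := fun i l => g i (k - l)
  have hφ : ∀ i l z w, φ i l (z + w) = φ i l z + ⟪G i l, w⟫ := fun i l z w => by
    simp only [φ, G, add_sub_right_comm z w, inner_add_right, add_assoc]
  have hfirstOrder : ∀ z ∈ X - {xnext}, ∃ s ∈ weightedSum B G '' convexWeights B,
      ⟪tk⁻¹ • (x k - xnext), z⟫ ≤ ⟪s, z⟫ := by
    rintro _ ⟨y, hy, b, hb, rfl⟩
    rw [mem_singleton_iff.1 hb]
    obtain ⟨w, hw, hle⟩ := exists_mem_convexWeights_cuttingPlaneModel_add_smul_le hφ (y - xnext)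
    exact ⟨_, ⟨w, hw, rfl⟩, inner_sub_le_of_isMinOn_add_sq_norm hXconvex htk hxnextX hy
      (isMinOn_iff.2 hmin) (hle xnext)⟩
  obtain ⟨_, ⟨w, hw, rfl⟩, hs⟩ := exists_forall_inner_le_of_forall_exists_inner_le
    ((convex_convexWeights B).linear_image _)
    ((isCompact_convexWeights B).image (weightedSum B G).continuous_of_finiteDimensional)
    (hXconvex.sub (convex_singleton xnext)) ⟨0, xnext, hxnextX, xnext, rfl, sub_self _⟩
    hfirstOrder
  obtain ⟨α, hα₀, hα₁, hαsum⟩ := exists_weights_of_mem_convexWeights G hw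
  refine ⟨α, hα₀, hα₁, ?_⟩
  rw [hαsum]
  exact eq_proj_sub_smul_of_forall_inner_le hP htk hxnextX fun y hy =>
    hs _ ⟨y, hy, xnext, rfl, rfl⟩

/-- If `xnext` minimizes over `X` the regularized cutting-plane
model `f̆ k (z) = ∑ i, ĥ i z + (1 / (2 tk)) ‖z - x k‖²`, where
`ĥ i z = max_{l ∈ B i} (f i (x (k-l)) + ⟪g i (k-l), z - x (k-l)⟫)` when
`B i ≠ ∅` and `ĥ i z = 0` otherwise, then there exist nonnegative weights
`α i l` summing to `1` over each nonempty `B i` such that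
`xnext = P (x k - tk • ∑ i, ∑ l ∈ B i, α i l • g i (k - l))`. -/
theorem incremental_cp_minimizer_is_projected_step
    (n m : ℕ)
    (X : Set (EuclideanSpace ℝ (Fin n)))
    (hXne : X.Nonempty) (hXclosed : IsClosed X) (hXconvex : Convex ℝ X)
    (f : Fin m → EuclideanSpace ℝ (Fin n) → ℝ)
    (hfconv : ∀ i, ConvexOn ℝ Set.univ (f i))
    (C : ℝ) (hC : 0 < C)
    -- every subgradient of any `f i` at any point of `X` has norm at most `C`
    (hCbound : ∀ i, ∀ z ∈ X, ∀ g : EuclideanSpace ℝ (Fin n),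
      (∀ y, f i z + ⟪g, y - z⟫ ≤ f i y) → ‖g‖ ≤ C)
    -- `P` is the Euclidean projection onto `X`
    (P : EuclideanSpace ℝ (Fin n) → EuclideanSpace ℝ (Fin n))
    (hP : ∀ u, P u ∈ X ∧ ∀ y ∈ X, ‖u - P u‖ ≤ ‖u - y‖)
    -- the iteration index `k` and the regularization parameter `tk > 0`
    (k : ℕ) (tk : ℝ) (htk : 0 < tk)
    -- the previous points `x 0, …, x k`, points of `X`
    (x : ℕ → EuclideanSpace ℝ (Fin n)) (hx : ∀ j, j ≤ k → x j ∈ X)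
    -- the index sets `B i ⊆ {0, …, k}` (possibly empty)
    (B : Fin m → Finset ℕ)
    (hB : ∀ i, ∀ l ∈ B i, l ≤ k)
    -- `g i (k - l)` is a subgradient of `f i` at `x (k - l)` for `l ∈ B i`
    (g : Fin m → ℕ → EuclideanSpace ℝ (Fin n))
    (hg : ∀ i, ∀ l ∈ B i, ∀ y,
      f i (x (k - l)) + ⟪g i (k - l), y - x (k - l)⟫ ≤ f i y)
    -- `xnext` minimizes the regularized model `f̆ k` over `X`
    (xnext : EuclideanSpace ℝ (Fin n)) (hxnextX : xnext ∈ X)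
    (hmin : ∀ z ∈ X,
      ((∑ i : Fin m,
          if hne : (B i).Nonempty then
            (B i).sup' hne
              (fun l => f i (x (k - l)) + ⟪g i (k - l), xnext - x (k - l)⟫)
          else 0) +
        1 / (2 * tk) * ‖xnext - x k‖ ^ 2) ≤
      ((∑ i : Fin m,
          if hne : (B i).Nonempty then
            (B i).sup' hne
              (fun l => f i (x (k - l)) + ⟪g i (k - l), z - x (k - l)⟫)
          else 0) +
        1 / (2 * tk) * ‖z - x k‖ ^ 2)) :
    ∃ α : Fin m → ℕ → ℝ,
      (∀ i l, 0 ≤ α i l) ∧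
      (∀ i, (B i).Nonempty → ∑ l ∈ B i, α i l = 1) ∧
      xnext = P (x k - tk • ∑ i : Fin m, ∑ l ∈ B i, α i l • g i (k - l)) :=
  incremental_cp_minimizer_is_projected_step_general n m X hXconvex f P hP k tk htk x B g xnext
    hxnextX hmin
end

section
/- (Fundamental inequality.) For any y ∈ X and any k ≥ 0 such that B_{k,i} ≠ ∅ for every i = 1,…,m, the iterates satisfy ‖x_{k+1} − y‖² ≤ ‖x_k − y‖² − 2 t_k ( f(x_k) − f(y) ) + 4 t_k t̄_{k−W,k−1} m² C² W + t_k² m² C², where f = Σ_{i=1}^m f_i, t̄_{k−W,k−1} = max{t_{k−W}, t_{k−W+1}, …, t_{k−1}}, and t_i = t_0 for i < 0 by convention. -/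
/-!
Since `P` is the nearest-point map of a convex set, it moves no point farther from any `y ∈ X`;
one step therefore gives `‖x_{k+1} - y‖² ≤ ‖x_k - y‖² - 2 t_k ⟪d_k, x_k - y⟫ + t_k² ‖d_k‖²`,
where the aggregated direction `d_k` has norm at most `m C`. Each delayed subgradient in `d_k`
was taken at some `x_{k-l}` with `l < W`, and since every step moves the iterate by at most
`t_j m C`, the drift `‖x_k - x_{k-l}‖` is at most `W t̄ m C`. The subgradient inequality at
`x_{k-l}`, together with `f_i x_k - f_i x_{k-l} ≤ C ‖x_k - x_{k-l}‖` (from a subgradient at `x_k`,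
which exists by Hahn–Banach), bounds `⟪g, x_k - y⟫` below by `f_i x_k - f_i y` up to `2 C` times
that drift.
-/

open RealInnerProductSpace
open Finset

section Subgradient

variable {E : Type*} [NormedAddCommGroup E] [InnerProductSpace ℝ E]

def IsSubgradient (f : E → ℝ) (z g : E) : Prop :=
  ∀ y, f z + ⟪g, y - z⟫ ≤ f y

lemma IsSubgradient.sub_le_mul_norm {f : E → ℝ} {z g : E} (hg : IsSubgradient f z g) (w : E) :
    f z - f w ≤ ‖g‖ * ‖z - w‖ := by
  have hsub := hg w
  have hcs : ⟪g, z - w⟫ ≤ ‖g‖ * ‖z - w‖ := real_inner_le_norm _ _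
  rw [← neg_sub z w, inner_neg_right] at hsub
  linarith

lemma IsSubgradient.sub_sub_le_inner {f : E → ℝ} {z z' g g' : E} {C : ℝ}
    (hg : IsSubgradient f z' g) (hgC : ‖g‖ ≤ C) (hg' : IsSubgradient f z g') (hg'C : ‖g'‖ ≤ C)
    (y : E) : f z - f y - 2 * C * ‖z - z'‖ ≤ ⟪g, z - y⟫ := by
  have hsub := hg y
  have hlip : f z - f z' ≤ C * ‖z - z'‖ := (hg'.sub_le_mul_norm z').trans (by gcongr)
  have hcs : -(‖g‖ * ‖z - z'‖) ≤ ⟪g, z - z'⟫ :=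
    neg_le_of_abs_le (abs_real_inner_le_norm _ _)
  have hdrift : ‖g‖ * ‖z - z'‖ ≤ C * ‖z - z'‖ := by gcongr
  have hsplit : ⟪g, z - y⟫ = ⟪g, z - z'⟫ - ⟪g, y - z'⟫ := by
    rw [← inner_sub_right, sub_sub_sub_cancel_right]
  linarith

end Subgradient

/-- Separating the point `(z, f z)` from the open convex strict epigraph gives a supporting
functional whose `ℝ`-component is positive, hence a non-vertical supporting hyperplane. -/
theorem ConvexOn.exists_strongDual_subgradient {E : Type*} [NormedAddCommGroup E]
    [NormedSpace ℝ E] {f : E → ℝ} (hf : ConvexOn ℝ Set.univ f) (hcont : Continuous f) (z : E) :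
    ∃ φ : StrongDual ℝ E, ∀ y, f z + φ (y - z) ≤ f y := by
  set S : Set (E × ℝ) := {p | p.1 ∈ Set.univ ∧ f p.1 < p.2}
  have hS : IsOpen S := by
    simpa [S] using isOpen_lt (hcont.comp continuous_fst) continuous_snd
  obtain ⟨φ, hφ⟩ := geometric_hahn_banach_point_open hf.convex_strict_epigraph hS
    (x := (z, f z)) (by simp)
  set ψ : StrongDual ℝ E := φ.comp (ContinuousLinearMap.inl ℝ E ℝ)
  set c := φ (0, 1)
  have hφ_apply : ∀ v s, φ (v, s) = ψ v + s * c := by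
    intro v s
    have hsplit : ((v, s) : E × ℝ) = (v, 0) + s • (0, 1) := by simp
    rw [hsplit, map_add, map_smul, smul_eq_mul]
    rfl
  have hlt : ∀ w s, f w < s → ψ z + f z * c < ψ w + s * c := by
    intro w s hs
    simpa [hφ_apply] using hφ (w, s) ⟨trivial, hs⟩
  have hc : 0 < c := by
    have := hlt z (f z + 1) (by linarith)
    linarith
  have hsupp : ∀ w, ψ z + f z * c ≤ ψ w + f w * c := by
    intro w
    refine le_of_forall_pos_lt_add fun ε hε => ?_
    have := hlt w (f w + ε / c) (by linarith [div_pos hε hc])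
    rwa [add_mul, div_mul_cancel₀ _ hc.ne', ← add_assoc] at this
  refine ⟨-c⁻¹ • ψ, fun y => ?_⟩
  have key : f z * c + -(ψ y - ψ z) ≤ f y * c := by linarith [hsupp y]
  calc f z + (-c⁻¹ • ψ) (y - z) = (f z * c + -(ψ y - ψ z)) / c := by
        simp only [smul_apply, map_sub, smul_eq_mul]
        field_simp
        ring
    _ ≤ f y * c / c := by gcongr
    _ = f y := mul_div_cancel_right₀ _ hc.ne'

theorem ConvexOn.exists_isSubgradient {E : Type*} [NormedAddCommGroup E] [InnerProductSpace ℝ E]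
    [FiniteDimensional ℝ E] {f : E → ℝ} (hf : ConvexOn ℝ Set.univ f) (z : E) :
    ∃ g, IsSubgradient f z g := by
  obtain ⟨φ, hφ⟩ := hf.exists_strongDual_subgradient
    (continuousOn_univ.mp (hf.continuousOn isOpen_univ)) z
  exact ⟨(InnerProductSpace.toDual ℝ E).symm φ, fun y => by
    rw [InnerProductSpace.toDual_symm_apply]; exact hφ y⟩

section Projection

variable {E : Type*} [NormedAddCommGroup E] [InnerProductSpace ℝ E] {K : Set E} {u p : E}

lemma Convex.norm_sub_le_of_isMinOn (hK : Convex ℝ K) (hp : p ∈ K)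
    (hmin : IsMinOn (fun w => ‖u - w‖) K p) {y : E} (hy : y ∈ K) : ‖p - y‖ ≤ ‖u - y‖ := by
  have : Nonempty K := ⟨⟨p, hp⟩⟩
  have hinf : ‖u - p‖ = ⨅ w : K, ‖u - w‖ :=
    le_antisymm (le_ciInf fun w => hmin w.2)
      (ciInf_le ⟨0, by rintro _ ⟨w, rfl⟩; positivity⟩ (⟨p, hp⟩ : K))
  have hobtuse := (norm_eq_iInf_iff_real_inner_le_zero hK hp).mp hinf y hy
  have hexpand : ‖u - y‖ ^ 2 = ‖u - p‖ ^ 2 - 2 * ⟪u - p, y - p⟫ + ‖p - y‖ ^ 2 := by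
    rw [← sub_sub_sub_cancel_right u y p, norm_sub_sq_real, norm_sub_rev y p]
  have hsq : ‖p - y‖ ^ 2 ≤ ‖u - y‖ ^ 2 := by nlinarith [sq_nonneg ‖u - p‖]
  exact pow_le_pow_iff_left₀ (norm_nonneg _) (norm_nonneg _) two_ne_zero |>.mp hsq

variable {x d : E} {s : ℝ}

lemma Convex.norm_sub_le_of_isMinOn_sub_smul (hK : Convex ℝ K) (hp : p ∈ K)
    (hmin : IsMinOn (fun w => ‖(x - s • d) - w‖) K p) (hx : x ∈ K) (hs : 0 ≤ s) :
    ‖p - x‖ ≤ s * ‖d‖ := by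
  calc ‖p - x‖ ≤ ‖(x - s • d) - x‖ := hK.norm_sub_le_of_isMinOn hp hmin hx
    _ = s * ‖d‖ := by rw [sub_sub_cancel_left, norm_neg, norm_smul, Real.norm_of_nonneg hs]

lemma Convex.sq_norm_sub_le_of_isMinOn_sub_smul (hK : Convex ℝ K) (hp : p ∈ K)
    (hmin : IsMinOn (fun w => ‖(x - s • d) - w‖) K p) {y : E} (hy : y ∈ K) :
    ‖p - y‖ ^ 2 ≤ ‖x - y‖ ^ 2 - 2 * s * ⟪d, x - y⟫ + s ^ 2 * ‖d‖ ^ 2 := by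
  calc ‖p - y‖ ^ 2 ≤ ‖(x - y) - s • d‖ ^ 2 := by
        rw [sub_right_comm]
        gcongr
        exact hK.norm_sub_le_of_isMinOn hp hmin hy
    _ = ‖x - y‖ ^ 2 - 2 * s * ⟪d, x - y⟫ + s ^ 2 * ‖d‖ ^ 2 := by
        rw [norm_sub_sq_real, real_inner_smul_right, norm_smul, mul_pow, Real.norm_eq_abs,
          sq_abs, real_inner_comm]
        ring

end Projection

section Aggregation

variable {E ι κ : Type*} [NormedAddCommGroup E] [InnerProductSpace ℝ E] [Fintype ι]
  {B : ι → Finset κ} {α : ι → κ → ℝ} {v : ι → κ → E}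

lemma norm_sum_sum_smul_le {C : ℝ} (hC : 0 ≤ C) (hα0 : ∀ i l, 0 ≤ α i l)
    (hα1 : ∀ i, (B i).Nonempty → ∑ l ∈ B i, α i l = 1) (hv : ∀ i, ∀ l ∈ B i, ‖v i l‖ ≤ C) :
    ‖∑ i, ∑ l ∈ B i, α i l • v i l‖ ≤ Fintype.card ι * C := by
  have hinner : ∀ i, ‖∑ l ∈ B i, α i l • v i l‖ ≤ C := by
    intro i
    rcases (B i).eq_empty_or_nonempty with hB | hB
    · simpa [hB] using hC
    · simpa using (convex_closedBall (0 : E) C).sum_mem (fun l _ => hα0 i l) (hα1 i hB)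
        fun l hl => mem_closedBall_zero_iff.mpr (hv i l hl)
  simpa using norm_sum_le_of_le univ fun i _ => hinner i

lemma sum_le_inner_sum_sum_smul {a : ι → ℝ} (w : E) (hα0 : ∀ i l, 0 ≤ α i l)
    (hα1 : ∀ i, ∑ l ∈ B i, α i l = 1) (ha : ∀ i, ∀ l ∈ B i, a i ≤ ⟪v i l, w⟫) :
    ∑ i, a i ≤ ⟪∑ i, ∑ l ∈ B i, α i l • v i l, w⟫ := by
  simp only [sum_inner, real_inner_smul_left]
  gcongr with i
  calc a i = ∑ l ∈ B i, α i l * a i := by rw [← sum_mul, hα1 i, one_mul]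
    _ ≤ ∑ l ∈ B i, α i l * ⟪v i l, w⟫ := by
        gcongr with l hl
        exacts [hα0 i l, ha i l hl]

end Aggregation

lemma norm_sub_le_mul_of_norm_succ_sub_le {E : Type*} [SeminormedAddCommGroup E] {x : ℕ → E}
    {a b : ℕ} (hab : a ≤ b) {T : ℝ} (hstep : ∀ j, a ≤ j → j < b → ‖x (j + 1) - x j‖ ≤ T) :
    ‖x b - x a‖ ≤ (b - a : ℕ) * T := by
  have := dist_le_Ico_sum_of_dist_le (f := x) hab (d := fun _ => T) fun {j} h1 h2 => by
    simpa [dist_eq_norm'] using hstep j h1 h2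
  simpa [dist_eq_norm'] using this

/-- (Fundamental inequality.) For any `y ∈ X` and any `k ≥ 0`
with `B k i ≠ ∅` for all `i`,
`‖x (k+1) - y‖² ≤ ‖x k - y‖² - 2 t k (f (x k) - f y) + 4 t k t̄ m² C² W + t k² m² C²`,
where `t̄ = max{t (k-W), …, t (k-1)}` with the convention `t i = t 0` for `i < 0`
(realized by truncated subtraction on `ℕ`). -/
theorem incremental_cp_fundamental_inequality
    (n m W : ℕ) (hW : 1 ≤ W)
    (X : Set (EuclideanSpace ℝ (Fin n)))
    (hXconvex : Convex ℝ X)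
    (f : Fin m → EuclideanSpace ℝ (Fin n) → ℝ)
    (hfconv : ∀ i, ConvexOn ℝ Set.univ (f i))
    (C : ℝ) (hC : 0 < C)
    -- every subgradient of any `f i` at any point of `X` has norm at most `C`
    (hCbound : ∀ i, ∀ z ∈ X, ∀ g : EuclideanSpace ℝ (Fin n),
      (∀ y, f i z + ⟪g, y - z⟫ ≤ f i y) → ‖g‖ ≤ C)
    -- `P` is the Euclidean projection onto `X`
    (P : EuclideanSpace ℝ (Fin n) → EuclideanSpace ℝ (Fin n))
    (hP : ∀ u, P u ∈ X ∧ ∀ y ∈ X, ‖u - P u‖ ≤ ‖u - y‖)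
    -- positive step sizes
    (t : ℕ → ℝ) (ht : ∀ k, 0 < t k)
    -- the iterates, lying in `X`
    (x : ℕ → EuclideanSpace ℝ (Fin n)) (hx : ∀ k, x k ∈ X)
    -- the index sets `B k i ⊆ {0, …, min k (W-1)}`
    (B : ℕ → Fin m → Finset ℕ)
    (hB : ∀ k i, ∀ l ∈ B k i, l ≤ min k (W - 1))
    -- `g i j` is a subgradient of `f i` at `x j` (used for `j = k - l`, `l ∈ B k i`)
    (g : Fin m → ℕ → EuclideanSpace ℝ (Fin n))
    (hg : ∀ k i, ∀ l ∈ B k i, ∀ y,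
      f i (x (k - l)) + ⟪g i (k - l), y - x (k - l)⟫ ≤ f i y)
    -- convex weights
    (α : ℕ → Fin m → ℕ → ℝ)
    (hα0 : ∀ k i l, 0 ≤ α k i l)
    (hα1 : ∀ k i, (B k i).Nonempty → ∑ l ∈ B k i, α k i l = 1)
    -- the update rule
    (hupdate : ∀ k, x (k + 1) =
      P (x k - t k • ∑ i : Fin m, ∑ l ∈ B k i, α k i l • g i (k - l)))
    (k : ℕ) (hk : ∀ i, (B k i).Nonempty)
    (y : EuclideanSpace ℝ (Fin n)) (hy : y ∈ X) :
    ‖x (k + 1) - y‖ ^ 2 ≤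
      ‖x k - y‖ ^ 2 -
          2 * t k * ((∑ i : Fin m, f i (x k)) - ∑ i : Fin m, f i y) +
        4 * t k *
            ((Finset.Icc (k - W) (k - 1)).sup'
              (Finset.nonempty_Icc.mpr (by omega)) t) *
            (m : ℝ) ^ 2 * C ^ 2 * (W : ℝ) +
        (t k) ^ 2 * (m : ℝ) ^ 2 * C ^ 2 := by
  set T := (Finset.Icc (k - W) (k - 1)).sup' (Finset.nonempty_Icc.mpr (by omega)) t
  have hT : 0 ≤ T := (ht (k - 1)).le.trans (le_sup' t (mem_Icc.mpr ⟨by omega, le_rfl⟩))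
  set D := W * (T * (m * C)) with hD
  have hdir : ∀ j, ‖∑ i, ∑ l ∈ B j i, α j i l • g i (j - l)‖ ≤ m * C := fun j => by
    simpa using norm_sum_sum_smul_le hC.le (hα0 j) (hα1 j)
      fun i l hl => hCbound i _ (hx _) _ (hg j i l hl)
  have hstep : ∀ j, ‖x (j + 1) - x j‖ ≤ t j * (m * C) := fun j => by
    rw [hupdate j]
    exact (hXconvex.norm_sub_le_of_isMinOn_sub_smul (hP _).1 (hP _).2 (hx j) (ht j).le).trans
      (by gcongr; exacts [(ht j).le, hdir j])
  have hdrift : ∀ i, ∀ l ∈ B k i, ‖x k - x (k - l)‖ ≤ D := fun i l hl => by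
    have hl := hB k i l hl
    calc ‖x k - x (k - l)‖ ≤ (k - (k - l) : ℕ) * (T * (m * C)) :=
          norm_sub_le_mul_of_norm_succ_sub_le (Nat.sub_le k l) fun j _ _ =>
            (hstep j).trans (by gcongr; exact le_sup' t (mem_Icc.mpr ⟨by omega, by omega⟩))
      _ ≤ D := by rw [hD]; gcongr; omega
  set d := ∑ i, ∑ l ∈ B k i, α k i l • g i (k - l)
  have hinner : ∑ i, (f i (x k) - f i y - 2 * C * D) ≤ ⟪d, x k - y⟫ := by
    refine sum_le_inner_sum_sum_smul _ (hα0 k) (fun i => hα1 k i (hk i)) fun i l hl => ?_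
    obtain ⟨g', hg'⟩ := (hfconv i).exists_isSubgradient (x k)
    have hdelayed := IsSubgradient.sub_sub_le_inner (hg k i l hl)
      (hCbound i _ (hx _) _ (hg k i l hl)) hg' (hCbound i _ (hx k) g' hg') y
    linarith [mul_le_mul_of_nonneg_left (hdrift i l hl) (by positivity : (0 : ℝ) ≤ 2 * C)]
  have hdescent := hXconvex.sq_norm_sub_le_of_isMinOn_sub_smul
    (hP (x k - t k • d)).1 (hP _).2 hy
  rw [← hupdate k] at hdescent
  have hsum : ∑ i, (f i (x k) - f i y - 2 * C * D) =
      (∑ i, f i (x k)) - (∑ i, f i y) - m * (2 * C * D) := by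
    simp [sum_sub_distrib]
  have htk := (ht k).le
  calc ‖x (k + 1) - y‖ ^ 2 ≤ ‖x k - y‖ ^ 2 - 2 * t k * ⟪d, x k - y⟫ + t k ^ 2 * ‖d‖ ^ 2 :=
        hdescent
    _ ≤ ‖x k - y‖ ^ 2 - 2 * t k * ((∑ i, f i (x k)) - (∑ i, f i y) - m * (2 * C * D)) +
          t k ^ 2 * (m * C) ^ 2 := by
        gcongr
        exacts [hsum ▸ hinner, hdir k]
    _ = _ := by rw [hD]; ring
end

section
/- Suppose the step size is constant, t_k = t > 0 for all k, and suppose f* = inf_{x ∈ X} Σ_{i=1}^m f_i(x) > −∞. Then liminf_{k→∞} f(x_k) ≤ f* + 2 m² t C² W + (1/2) m² t C², where f = Σ_{i=1}^m f_i. -/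
/-!
Projection onto `X` is nonexpansive, so for every `y ∈ X` the update gives
`‖x_{k+1} - y‖² ≤ ‖x_k - y‖² - 2t⟪d_k, x_k - y⟫ + t²m²C²`, where `d_k` is the aggregated
direction and `‖d_k‖ ≤ mC`. Each stale subgradient in `d_k` was taken at an iterate at most
`W` steps back, hence within `W·t·m·C` of `x_k`; with the `C`-Lipschitz bound on `X` this costs
at most `2C·W·t·m·C` per component in `⟪d_k, x_k - y⟫ ≥ f(x_k) - f(y) - …`. If `f(x_k)` stayed
above `f(y) + 2m²tC²W + m²tC²/2`, the squared distance to `y` would decrease by a fixed amount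
at every step, which is impossible; then take the infimum over `y`.
-/

open RealInnerProductSpace Finset Filter

section Subgradient

variable {E : Type*}

theorem ConvexOn.exists_strongDual_le_sub [NormedAddCommGroup E] [NormedSpace ℝ E]
    {f : E → ℝ} (hf : ConvexOn ℝ Set.univ f) (hcont : Continuous f) (p : E) :
    ∃ φ : StrongDual ℝ E, ∀ y, φ (y - p) ≤ f y - f p := by
  -- separate `(p, f p)` from the open strict epigraph; the separating functional is not vertical
  have hconv : Convex ℝ {q : E × ℝ | f q.1 < q.2} := by
    simpa using hf.convex_strict_epigraph
  have hopen : IsOpen {q : E × ℝ | f q.1 < q.2} :=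
    isOpen_lt (hcont.comp continuous_fst) continuous_snd
  obtain ⟨ψ, hψ⟩ := geometric_hahn_banach_open_point hconv hopen (x := (p, f p)) (by simp)
  set c := ψ (0, 1)
  have hψ_apply : ∀ y r, ψ (y, r) = ψ (y, 0) + r * c := fun y r => by
    rw [← smul_eq_mul, ← map_smul, ← map_add, Prod.smul_mk, smul_zero, smul_eq_mul, mul_one,
      Prod.mk_add_mk, add_zero, zero_add]
  have hc : c < 0 := by
    have := hψ (p, f p + 1) (by simp)
    rw [hψ_apply p (f p + 1), hψ_apply p (f p)] at this
    linarith
  have hgraph : ∀ y, ψ (y, 0) + f y * c ≤ ψ (p, 0) + f p * c := fun y => by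
    refine le_of_forall_pos_lt_add fun ε hε => ?_
    have := hψ (y, f y + ε / -c) (by simp [div_pos hε (neg_pos.2 hc)])
    rw [hψ_apply y, hψ_apply p, add_mul, div_mul_eq_mul_div, div_neg, mul_div_assoc,
      div_self hc.ne, mul_one] at this
    linarith
  refine ⟨(-c)⁻¹ • ψ.comp (ContinuousLinearMap.inl ℝ E ℝ), fun y => ?_⟩
  have hsub : ψ (y - p, 0) = ψ (y, 0) - ψ (p, 0) := by
    rw [← map_sub, Prod.mk_sub_mk, sub_zero]
  rw [smul_apply, ContinuousLinearMap.comp_apply,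
    ContinuousLinearMap.inl_apply, hsub, smul_eq_mul, inv_mul_le_iff₀ (neg_pos.2 hc)]
  nlinarith [hgraph y]

variable [NormedAddCommGroup E] [InnerProductSpace ℝ E] [FiniteDimensional ℝ E]

theorem ConvexOn.exists_subgradient {f : E → ℝ} (hf : ConvexOn ℝ Set.univ f) (p : E) :
    ∃ g : E, ∀ y, f p + ⟪g, y - p⟫ ≤ f y := by
  obtain ⟨φ, hφ⟩ :=
    hf.exists_strongDual_le_sub (continuousOn_univ.1 (hf.continuousOn isOpen_univ)) p
  refine ⟨(InnerProductSpace.toDual ℝ E).symm φ, fun y => ?_⟩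
  rw [InnerProductSpace.toDual_symm_apply]
  linarith [hφ y]

theorem ConvexOn.le_add_mul_norm_sub {f : E → ℝ} (hf : ConvexOn ℝ Set.univ f) {C : ℝ} {z : E}
    (hC : ∀ g : E, (∀ y, f z + ⟪g, y - z⟫ ≤ f y) → ‖g‖ ≤ C) (w : E) :
    f z ≤ f w + C * ‖z - w‖ := by
  obtain ⟨g, hg⟩ := hf.exists_subgradient z
  have hinner : -(‖g‖ * ‖w - z‖) ≤ ⟪g, w - z⟫ := neg_le_of_abs_le (abs_real_inner_le_norm _ _)
  have hnorm : ‖g‖ * ‖w - z‖ ≤ C * ‖z - w‖ := by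
    rw [norm_sub_rev w z]
    exact mul_le_mul_of_nonneg_right (hC g hg) (norm_nonneg _)
  linarith [hg w]

end Subgradient

theorem norm_sub_le_mul_of_norm_succ_sub_le_s8 {E : Type*} [SeminormedAddCommGroup E]
    {x : ℕ → E} {D : ℝ} (h : ∀ k, ‖x (k + 1) - x k‖ ≤ D) (k l : ℕ) : ‖x k - x (k - l)‖ ≤ l * D := by
  have hD : 0 ≤ D := (norm_nonneg _).trans (h 0)
  have := dist_le_Ico_sum_of_dist_le (f := x) (Nat.sub_le k l) (d := fun _ => D)
    fun _ _ => by rw [dist_comm, dist_eq_norm]; exact h _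
  rw [sum_const, Nat.card_Ico, nsmul_eq_mul, dist_comm, dist_eq_norm] at this
  have hlen : ((k - (k - l) : ℕ) : ℝ) ≤ l := by exact_mod_cast (by omega : k - (k - l) ≤ l)
  exact this.trans (mul_le_mul_of_nonneg_right hlen hD)

section Projection

variable {E : Type*} [NormedAddCommGroup E] [InnerProductSpace ℝ E]

theorem norm_sub_le_of_forall_norm_sub_le {X : Set E} (hX : Convex ℝ X) {u p : E} (hp : p ∈ X)
    (hmin : ∀ y ∈ X, ‖u - p‖ ≤ ‖u - y‖) {y : E} (hy : y ∈ X) : ‖p - y‖ ≤ ‖u - y‖ := by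
  have : Nonempty X := ⟨⟨p, hp⟩⟩
  have hvi : ⟪u - p, y - p⟫ ≤ 0 := by
    refine (norm_eq_iInf_iff_real_inner_le_zero hX hp).1 (le_antisymm ?_ ?_) y hy
    · exact le_ciInf fun w => hmin w w.2
    · exact ciInf_le (f := fun w : X => ‖u - w‖)
        ⟨0, Set.forall_mem_range.2 fun _ => norm_nonneg _⟩ ⟨p, hp⟩
  have hexpand : ‖u - y‖ ^ 2 = ‖u - p‖ ^ 2 - 2 * ⟪u - p, y - p⟫ + ‖p - y‖ ^ 2 := by
    rw [show u - y = (u - p) + (p - y) by abel, norm_add_sq_real,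
      show p - y = -(y - p) by abel, inner_neg_right, norm_neg]
    ring
  refine le_of_pow_le_pow_left₀ two_ne_zero (norm_nonneg _) ?_
  nlinarith [sq_nonneg ‖u - p‖]

theorem norm_proj_sub_sq_le {X : Set E} (hX : Convex ℝ X) {P : E → E}
    (hP : ∀ u, P u ∈ X ∧ ∀ y ∈ X, ‖u - P u‖ ≤ ‖u - y‖) (z d : E) (t : ℝ) {y : E} (hy : y ∈ X) :
    ‖P (z - t • d) - y‖ ^ 2 ≤ ‖z - y‖ ^ 2 - 2 * t * ⟪d, z - y⟫ + t ^ 2 * ‖d‖ ^ 2 := by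
  have hle := norm_sub_le_of_forall_norm_sub_le hX (hP (z - t • d)).1 (hP _).2 hy
  calc ‖P (z - t • d) - y‖ ^ 2 ≤ ‖(z - y) - t • d‖ ^ 2 := by
        rw [sub_right_comm]; gcongr
    _ = ‖z - y‖ ^ 2 - 2 * t * ⟪d, z - y⟫ + t ^ 2 * ‖d‖ ^ 2 := by
        rw [norm_sub_sq_real, real_inner_smul_right, norm_smul, mul_pow, Real.norm_eq_abs,
          sq_abs, real_inner_comm]
        ring

end Projection

theorem liminf_le_of_succ_le_sub_mul {u d : ℕ → ℝ} {c b : ℝ} (hc : 0 < c)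
    (hd : ∀ k, 0 ≤ d k) {N : ℕ} (h : ∀ k ≥ N, d (k + 1) ≤ d k - c * (u k - b)) :
    liminf (fun k => (u k : EReal)) atTop ≤ b := by
  by_contra! hlt
  obtain ⟨r, hbr, hr⟩ := EReal.lt_iff_exists_real_btwn.1 hlt
  have hbr : b < r := EReal.coe_lt_coe_iff.1 hbr
  obtain ⟨N', hN'⟩ := eventually_atTop.1 (eventually_lt_of_lt_liminf hr)
  set K := max N N'
  have hdrop : ∀ j : ℕ, d (K + j) ≤ d K - j * (c * (r - b)) := by
    intro j
    induction j with
    | zero => simp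
    | succ j ih =>
      have hu : r < u (K + j) := EReal.coe_lt_coe_iff.1 (hN' _ (by omega))
      have hgap : c * (r - b) ≤ c * (u (K + j) - b) := by gcongr
      have := h (K + j) (by omega)
      rw [← add_assoc]
      push_cast
      linarith
  obtain ⟨j, hj⟩ := exists_nat_gt (d K / (c * (r - b)))
  have hpos : 0 < c * (r - b) := mul_pos hc (sub_pos.2 hbr)
  rw [div_lt_iff₀ hpos] at hj
  linarith [hdrop j, hd (K + j)]

theorem EReal.le_coe_add_of_isGLB {S : Set ℝ} {a δ : ℝ} (ha : IsGLB S a) {L : EReal}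
    (h : ∀ s ∈ S, L ≤ ↑(s + δ)) : L ≤ ↑(a + δ) := by
  by_contra! hlt
  obtain ⟨r, har, hr⟩ := EReal.lt_iff_exists_real_btwn.1 hlt
  have har : a + δ < r := EReal.coe_lt_coe_iff.1 har
  obtain ⟨s, hs, -, hsr⟩ := ha.exists_between (b := r - δ) (by linarith)
  have := hr.trans_le (h s hs)
  norm_cast at this
  linarith

theorem norm_sum_smul_le_of_sum_le_one {E ι : Type*} [SeminormedAddCommGroup E]
    [NormedSpace ℝ E] {s : Finset ι} {a : ι → ℝ} {v : ι → E} {C : ℝ} (ha0 : ∀ l ∈ s, 0 ≤ a l)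
    (ha1 : ∑ l ∈ s, a l ≤ 1) (hv : ∀ l ∈ s, ‖v l‖ ≤ C) (hC : 0 ≤ C) :
    ‖∑ l ∈ s, a l • v l‖ ≤ C :=
  calc ‖∑ l ∈ s, a l • v l‖ ≤ ∑ l ∈ s, a l * C := by
        refine (norm_sum_le _ _).trans (sum_le_sum fun l hl => ?_)
        rw [norm_smul, Real.norm_of_nonneg (ha0 l hl)]
        exact mul_le_mul_of_nonneg_left (hv l hl) (ha0 l hl)
    _ ≤ C := by rw [← sum_mul]; exact mul_le_of_le_one_left hC ha1

section Incremental

variable {E : Type*} [NormedAddCommGroup E] [InnerProductSpace ℝ E]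

theorem sub_sub_le_inner_of_subgradient {f : E → ℝ} {C : ℝ} {g z z' : E}
    (hg : ∀ y, f z' + ⟪g, y - z'⟫ ≤ f y) (hgC : ‖g‖ ≤ C)
    (hlip : f z ≤ f z' + C * ‖z - z'‖) (y : E) :
    f z - f y - 2 * C * ‖z - z'‖ ≤ ⟪g, z - y⟫ := by
  have hsplit : ⟪g, z - y⟫ = ⟪g, z - z'⟫ - ⟪g, y - z'⟫ := by
    rw [← inner_sub_right, sub_sub_sub_cancel_right]
  have hnear : -(C * ‖z - z'‖) ≤ ⟪g, z - z'⟫ :=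
    (neg_le_neg (mul_le_mul_of_nonneg_right hgC (norm_nonneg _))).trans
      (neg_le_of_abs_le (abs_real_inner_le_norm _ _))
  linarith [hg y]

theorem sub_sub_le_inner_sum_smul_of_subgradient {ι : Type*} {f : E → ℝ} {C ρ : ℝ} {z : E}
    {s : Finset ι} {a : ι → ℝ} {z' v : ι → E} (ha0 : ∀ l ∈ s, 0 ≤ a l)
    (ha1 : ∑ l ∈ s, a l = 1) (hv : ∀ l ∈ s, ∀ y, f (z' l) + ⟪v l, y - z' l⟫ ≤ f y)
    (hvC : ∀ l ∈ s, ‖v l‖ ≤ C) (hlip : ∀ w, f z ≤ f w + C * ‖z - w‖)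
    (hρ : ∀ l ∈ s, ‖z - z' l‖ ≤ ρ) (hC : 0 ≤ C) (y : E) :
    f z - f y - 2 * C * ρ ≤ ⟪∑ l ∈ s, a l • v l, z - y⟫ := by
  rw [sum_inner]
  calc f z - f y - 2 * C * ρ = ∑ l ∈ s, a l * (f z - f y - 2 * C * ρ) := by
        rw [← sum_mul, ha1, one_mul]
    _ ≤ ∑ l ∈ s, ⟪a l • v l, z - y⟫ := by
        refine sum_le_sum fun l hl => ?_
        rw [real_inner_smul_left]
        refine mul_le_mul_of_nonneg_left ?_ (ha0 l hl)
        have := sub_sub_le_inner_of_subgradient (hv l hl) (hvC l hl) (hlip (z' l)) y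
        linarith [mul_le_mul_of_nonneg_left (hρ l hl) (mul_nonneg zero_le_two hC)]

variable {m : ℕ}

def aggregatedSubgradient (B : ℕ → Fin m → Finset ℕ) (α : ℕ → Fin m → ℕ → ℝ)
    (g : Fin m → ℕ → E) (k : ℕ) : E :=
  ∑ i, ∑ l ∈ B k i, α k i l • g i (k - l)

variable {B : ℕ → Fin m → Finset ℕ} {α : ℕ → Fin m → ℕ → ℝ} {g : Fin m → ℕ → E} {C : ℝ}

theorem norm_aggregatedSubgradient_le (hα0 : ∀ k i l, 0 ≤ α k i l)
    (hα1 : ∀ k i, (B k i).Nonempty → ∑ l ∈ B k i, α k i l = 1)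
    (hgC : ∀ k i, ∀ l ∈ B k i, ‖g i (k - l)‖ ≤ C) (hC : 0 ≤ C) (k : ℕ) :
    ‖aggregatedSubgradient B α g k‖ ≤ m * C :=
  calc ‖aggregatedSubgradient B α g k‖ ≤ ∑ _i : Fin m, C := by
        refine (norm_sum_le _ _).trans (sum_le_sum fun i _ => ?_)
        refine norm_sum_smul_le_of_sum_le_one (fun l _ => hα0 k i l) ?_ (hgC k i) hC
        obtain hempty | hne := (B k i).eq_empty_or_nonempty
        · simp [hempty]
        · exact (hα1 k i hne).le
    _ = m * C := by simp

theorem sum_sub_sum_sub_le_inner_aggregatedSubgradient {f : Fin m → E → ℝ} {x : ℕ → E} {ρ : ℝ}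
    {k : ℕ} (hα0 : ∀ k i l, 0 ≤ α k i l)
    (hα1 : ∀ k i, (B k i).Nonempty → ∑ l ∈ B k i, α k i l = 1) (hne : ∀ i, (B k i).Nonempty)
    (hg : ∀ i, ∀ l ∈ B k i, ∀ y, f i (x (k - l)) + ⟪g i (k - l), y - x (k - l)⟫ ≤ f i y)
    (hgC : ∀ i, ∀ l ∈ B k i, ‖g i (k - l)‖ ≤ C)
    (hlip : ∀ i w, f i (x k) ≤ f i w + C * ‖x k - w‖)
    (hρ : ∀ i, ∀ l ∈ B k i, ‖x k - x (k - l)‖ ≤ ρ) (hC : 0 ≤ C) (y : E) :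
    ∑ i, f i (x k) - ∑ i, f i y - m * (2 * C * ρ) ≤ ⟪aggregatedSubgradient B α g k, x k - y⟫ := by
  rw [aggregatedSubgradient, sum_inner]
  calc ∑ i, f i (x k) - ∑ i, f i y - m * (2 * C * ρ)
        = ∑ i, (f i (x k) - f i y - 2 * C * ρ) := by simp [sum_sub_distrib]
    _ ≤ _ := sum_le_sum fun i _ => sub_sub_le_inner_sum_smul_of_subgradient
        (fun l _ => hα0 k i l) (hα1 k i (hne i)) (hg i) (hgC i) (hlip i) (hρ i) hC y

theorem norm_iterate_sub_sq_le_of_constant_step {W : ℕ} {X : Set E} (hX : Convex ℝ X)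
    {f : Fin m → E → ℝ} {P : E → E} (hP : ∀ u, P u ∈ X ∧ ∀ y ∈ X, ‖u - P u‖ ≤ ‖u - y‖)
    {t : ℝ} (ht : 0 ≤ t) {x : ℕ → E} (hx : ∀ k, x k ∈ X)
    (hB : ∀ k i, ∀ l ∈ B k i, l ≤ W)
    (hg : ∀ k i, ∀ l ∈ B k i, ∀ y, f i (x (k - l)) + ⟪g i (k - l), y - x (k - l)⟫ ≤ f i y)
    (hgC : ∀ k i, ∀ l ∈ B k i, ‖g i (k - l)‖ ≤ C)
    (hlip : ∀ k i w, f i (x k) ≤ f i w + C * ‖x k - w‖) (hC : 0 ≤ C)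
    (hα0 : ∀ k i l, 0 ≤ α k i l) (hα1 : ∀ k i, (B k i).Nonempty → ∑ l ∈ B k i, α k i l = 1)
    (hupdate : ∀ k, x (k + 1) = P (x k - t • aggregatedSubgradient B α g k))
    (hfull : ∀ k, W - 1 ≤ k → ∀ i, (B k i).Nonempty) {y : E} (hy : y ∈ X) {k : ℕ}
    (hk : W - 1 ≤ k) :
    ‖x (k + 1) - y‖ ^ 2 ≤ ‖x k - y‖ ^ 2 - 2 * t * (∑ i, f i (x k) -
      (∑ i, f i y + (2 * m ^ 2 * t * C ^ 2 * W + 1 / 2 * m ^ 2 * t * C ^ 2))) := by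
  have hdir := norm_aggregatedSubgradient_le hα0 hα1 hgC hC
  have hstep : ∀ k, ‖x (k + 1) - x k‖ ≤ t * (m * C) := fun k =>
    calc ‖x (k + 1) - x k‖ ≤ ‖x k - t • aggregatedSubgradient B α g k - x k‖ := by
          rw [hupdate k]; exact norm_sub_le_of_forall_norm_sub_le hX (hP _).1 (hP _).2 (hx k)
      _ = t * ‖aggregatedSubgradient B α g k‖ := by
          rw [sub_sub_cancel_left, norm_neg, norm_smul, Real.norm_of_nonneg ht]
      _ ≤ t * (m * C) := by gcongr; exact hdir k
  have hdelay : ∀ i, ∀ l ∈ B k i, ‖x k - x (k - l)‖ ≤ W * (t * (m * C)) := fun i l hl =>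
    (norm_sub_le_mul_of_norm_succ_sub_le_s8 hstep k l).trans <| by
      have := hB k i l hl
      gcongr
  have hinner := sum_sub_sum_sub_le_inner_aggregatedSubgradient hα0 hα1 (hfull k hk) (hg k)
    (hgC k) (hlip k) hdelay hC y
  have hproj := norm_proj_sub_sq_le hX hP (x k) (aggregatedSubgradient B α g k) t hy
  have hsq : t ^ 2 * ‖aggregatedSubgradient B α g k‖ ^ 2 ≤ t ^ 2 * (m * C) ^ 2 := by
    gcongr; exact hdir k
  rw [hupdate k]
  linarith [mul_le_mul_of_nonneg_left hinner (by positivity : (0 : ℝ) ≤ 2 * t)]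

end Incremental

theorem incremental_cp_constant_step_suboptimality_bound_general
    (n m W : ℕ)
    (X : Set (EuclideanSpace ℝ (Fin n)))
    (hXconvex : Convex ℝ X)
    (f : Fin m → EuclideanSpace ℝ (Fin n) → ℝ)
    (hfconv : ∀ i, ConvexOn ℝ Set.univ (f i))
    (C : ℝ) (hC : 0 < C)
    -- every subgradient of any `f i` at any point of `X` has norm at most `C`
    (hCbound : ∀ i, ∀ z ∈ X, ∀ g : EuclideanSpace ℝ (Fin n),
      (∀ y, f i z + ⟪g, y - z⟫ ≤ f i y) → ‖g‖ ≤ C)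
    -- `P` is the Euclidean projection onto `X`
    (P : EuclideanSpace ℝ (Fin n) → EuclideanSpace ℝ (Fin n))
    (hP : ∀ u, P u ∈ X ∧ ∀ y ∈ X, ‖u - P u‖ ≤ ‖u - y‖)
    (t : ℕ → ℝ)
    -- the iterates, lying in `X`
    (x : ℕ → EuclideanSpace ℝ (Fin n)) (hx : ∀ k, x k ∈ X)
    -- the index sets `B k i ⊆ {0, …, min k (W-1)}`
    (B : ℕ → Fin m → Finset ℕ)
    (hB : ∀ k i, ∀ l ∈ B k i, l ≤ min k (W - 1))
    -- `g i j` is a subgradient of `f i` at `x j` (used for `j = k - l`, `l ∈ B k i`)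
    (g : Fin m → ℕ → EuclideanSpace ℝ (Fin n))
    (hg : ∀ k i, ∀ l ∈ B k i, ∀ y,
      f i (x (k - l)) + ⟪g i (k - l), y - x (k - l)⟫ ≤ f i y)
    -- convex weights
    (α : ℕ → Fin m → ℕ → ℝ)
    (hα0 : ∀ k i l, 0 ≤ α k i l)
    (hα1 : ∀ k i, (B k i).Nonempty → ∑ l ∈ B k i, α k i l = 1)
    -- the update rule
    (hupdate : ∀ k, x (k + 1) =
      P (x k - t k • ∑ i : Fin m, ∑ l ∈ B k i, α k i l • g i (k - l)))    -- every component is evaluated at least once in every `W` iterations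
    (hfull : ∀ k, W - 1 ≤ k → ∀ i, (B k i).Nonempty)
    -- constant step size
    (tc : ℝ) (htc : 0 < tc) (hconst : ∀ k, t k = tc)
    -- `fstar = inf_{z ∈ X} f z` is finite
    (fstar : ℝ)
    (hfstar : IsGLB ((fun z => ∑ i : Fin m, f i z) '' X) fstar) :
    Filter.liminf (fun k => ((∑ i : Fin m, f i (x k) : ℝ) : EReal))
        Filter.atTop ≤
      ((fstar + 2 * (m : ℝ) ^ 2 * tc * C ^ 2 * (W : ℝ) +
          1 / 2 * (m : ℝ) ^ 2 * tc * C ^ 2 : ℝ) : EReal) := by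
  have hgC : ∀ k i, ∀ l ∈ B k i, ‖g i (k - l)‖ ≤ C := fun k i l hl =>
    hCbound i _ (hx _) _ (hg k i l hl)
  have hlip : ∀ k i w, f i (x k) ≤ f i w + C * ‖x k - w‖ := fun k i =>
    (hfconv i).le_add_mul_norm_sub (hCbound i _ (hx k))
  have hdelay : ∀ k i, ∀ l ∈ B k i, l ≤ W := fun k i l hl =>
    (hB k i l hl).trans ((min_le_right _ _).trans (Nat.sub_le W 1))
  have hupdate' : ∀ k, x (k + 1) = P (x k - tc • aggregatedSubgradient B α g k) := fun k => by
    rw [hupdate k, hconst k, aggregatedSubgradient]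
  rw [add_assoc]
  refine EReal.le_coe_add_of_isGLB hfstar ?_
  rintro _ ⟨y, hy, rfl⟩
  exact liminf_le_of_succ_le_sub_mul (by positivity) (fun k => sq_nonneg ‖x k - y‖) fun k hk =>
    norm_iterate_sub_sq_le_of_constant_step hXconvex hP htc.le hx hdelay hg hgC hlip hC.le hα0 hα1
      hupdate' hfull hy hk

/-- Constant step size, `f* = inf_X f > -∞`: then
`liminf f (x k) ≤ f* + 2 m² t C² W + (1/2) m² t C²`. -/
theorem incremental_cp_constant_step_suboptimality_bound
    (n m W : ℕ) (hW : 1 ≤ W)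
    (X : Set (EuclideanSpace ℝ (Fin n)))
    (hXne : X.Nonempty) (hXclosed : IsClosed X) (hXconvex : Convex ℝ X)
    (f : Fin m → EuclideanSpace ℝ (Fin n) → ℝ)
    (hfconv : ∀ i, ConvexOn ℝ Set.univ (f i))
    (C : ℝ) (hC : 0 < C)
    -- every subgradient of any `f i` at any point of `X` has norm at most `C`
    (hCbound : ∀ i, ∀ z ∈ X, ∀ g : EuclideanSpace ℝ (Fin n),
      (∀ y, f i z + ⟪g, y - z⟫ ≤ f i y) → ‖g‖ ≤ C)
    -- `P` is the Euclidean projection onto `X`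
    (P : EuclideanSpace ℝ (Fin n) → EuclideanSpace ℝ (Fin n))
    (hP : ∀ u, P u ∈ X ∧ ∀ y ∈ X, ‖u - P u‖ ≤ ‖u - y‖)
    -- positive step sizes
    (t : ℕ → ℝ) (ht : ∀ k, 0 < t k)
    -- the iterates, lying in `X`
    (x : ℕ → EuclideanSpace ℝ (Fin n)) (hx : ∀ k, x k ∈ X)
    -- the index sets `B k i ⊆ {0, …, min k (W-1)}`
    (B : ℕ → Fin m → Finset ℕ)
    (hB : ∀ k i, ∀ l ∈ B k i, l ≤ min k (W - 1))
    -- `g i j` is a subgradient of `f i` at `x j` (used for `j = k - l`, `l ∈ B k i`)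
    (g : Fin m → ℕ → EuclideanSpace ℝ (Fin n))
    (hg : ∀ k i, ∀ l ∈ B k i, ∀ y,
      f i (x (k - l)) + ⟪g i (k - l), y - x (k - l)⟫ ≤ f i y)
    -- convex weights
    (α : ℕ → Fin m → ℕ → ℝ)
    (hα0 : ∀ k i l, 0 ≤ α k i l)
    (hα1 : ∀ k i, (B k i).Nonempty → ∑ l ∈ B k i, α k i l = 1)
    (hα2 : ∀ k i, B k i = ∅ → ∀ l, α k i l = 0)
    -- the update rule
    (hupdate : ∀ k, x (k + 1) =
      P (x k - t k • ∑ i : Fin m, ∑ l ∈ B k i, α k i l • g i (k - l)))    -- every component is evaluated at least once in every `W` iterations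
    (hfull : ∀ k, W - 1 ≤ k → ∀ i, (B k i).Nonempty)
    -- constant step size
    (tc : ℝ) (htc : 0 < tc) (hconst : ∀ k, t k = tc)
    -- `fstar = inf_{z ∈ X} f z` is finite
    (fstar : ℝ)
    (hfstar : IsGLB ((fun z => ∑ i : Fin m, f i z) '' X) fstar) :
    Filter.liminf (fun k => ((∑ i : Fin m, f i (x k) : ℝ) : EReal))
        Filter.atTop ≤
      ((fstar + 2 * (m : ℝ) ^ 2 * tc * C ^ 2 * (W : ℝ) +
          1 / 2 * (m : ℝ) ^ 2 * tc * C ^ 2 : ℝ) : EReal) :=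
  incremental_cp_constant_step_suboptimality_bound_general n m W X hXconvex f hfconv C hC hCbound P
    hP t x hx B hB g hg α hα0 hα1 hupdate hfull tc htc hconst fstar hfstar
end

section
/- Suppose the step sizes satisfy t_k > 0 for all k, t_k ≥ t_{k+1} for all k, Σ_{k=0}^∞ t_k = ∞, and Σ_{k=0}^∞ t_k² < ∞, and suppose the set of optimal solutions X* = {x ∈ X : f(x) = inf_{y ∈ X} f(y)} is nonempty, where f = Σ_{i=1}^m f_i. Then the sequence {x_k} converges to some point x* ∈ X*. -/
/-!
Projection onto `X` is nonexpansive towards points of `X`, so for `z ∈ X` the squared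
distance `‖x_k - z‖²` drops by `2 t_k ⟪v_k, x_k - z⟫` up to `t_k² ‖v_k‖²`, where `v_k` is the
aggregated direction. Every subgradient in `v_k` was computed at most `W - 1` steps earlier, at
a point within `O(t_{k-W+1})` of `x_k`; as the `f_i` are `C`-Lipschitz on `X`, this gives
`⟪v_k, x_k - z⟫ ≥ f(x_k) - f(z) - O(t_{k-W+1})`, and all errors are `O(t_{k-W+1}²)`, a summable
sequence. For optimal `z` this makes `‖x_k - z‖²` convergent and `∑ t_k (f(x_k) - f*)` finite;
since `∑ t_k = ∞` the gap tends to `0` along a subsequence, whose cluster point `x̄` is optimal.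
Then `‖x_k - x̄‖²` converges and has `0` as a limit point, so `x_k → x̄`.
-/

open RealInnerProductSpace Filter Topology Set

section Sequences

theorem tendsto_and_summable_of_le_sub_add {d q s : ℕ → ℝ} (hd : ∀ k, 0 ≤ d k)
    (hq : ∀ k, 0 ≤ q k) (hs : Summable s) (h : ∀ k, d (k + 1) ≤ d k - q k + s k) :
    (∃ L, Tendsto d atTop (𝓝 L)) ∧ Summable q := by
  set Q := fun k => ∑ j ∈ Finset.range k, q j with hQ
  set S := fun k => ∑ j ∈ Finset.range k, s j with hS
  -- `w` is antitone and bounded below, and `d = w - Q + S` with `Q`, `S` convergent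
  set w := fun k => d k + Q k - S k with hw
  have hanti : Antitone w := antitone_nat_of_succ_le fun k => by
    simp only [hw, hQ, hS, Finset.sum_range_succ]
    linarith [h k]
  obtain ⟨σ, hσ⟩ := hs.hasSum.tendsto_sum_nat.bddAbove_range
  have hSσ : ∀ k, S k ≤ σ := fun k => hσ ⟨k, rfl⟩
  have hQle : ∀ k, Q k ≤ d 0 + σ := fun k => by
    have h0 : w k ≤ w 0 := hanti (Nat.zero_le k)
    simp only [hw, hQ, hS, Finset.sum_range_zero] at h0
    linarith [hd k, hSσ k]
  have hqsum : Summable q := summable_of_sum_range_le hq hQle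
  have hwbdd : BddBelow (range w) := ⟨-σ, by
    rintro _ ⟨k, rfl⟩
    linarith [hd k, hSσ k, Finset.sum_nonneg fun j (_ : j ∈ Finset.range k) => hq j]⟩
  refine ⟨⟨_, ((tendsto_atTop_ciInf hanti hwbdd).sub hqsum.hasSum.tendsto_sum_nat).add
    hs.hasSum.tendsto_sum_nat |>.congr fun k => ?_⟩, hqsum⟩
  simp only [hw]
  ring

theorem tendsto_and_summable_of_eventually_le_sub_add {d q s : ℕ → ℝ} (hd : ∀ k, 0 ≤ d k)
    (hq : ∀ k, 0 ≤ q k) (hs : Summable s)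
    (h : ∀ᶠ k in atTop, d (k + 1) ≤ d k - q k + s k) :
    (∃ L, Tendsto d atTop (𝓝 L)) ∧ Summable q := by
  obtain ⟨K, hK⟩ := eventually_atTop.1 h
  obtain ⟨⟨L, hL⟩, hqK⟩ := tendsto_and_summable_of_le_sub_add (d := fun k => d (k + K))
    (q := fun k => q (k + K)) (fun k => hd _) (fun k => hq _) ((summable_nat_add_iff K).2 hs)
    fun k => by simpa only [add_right_comm] using hK (k + K) (Nat.le_add_left K k)
  exact ⟨⟨L, (tendsto_add_atTop_iff_nat K).1 hL⟩, (summable_nat_add_iff K).1 hqK⟩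

theorem exists_strictMono_tendsto_zero_of_summable_mul {t a : ℕ → ℝ} (ht : ∀ k, 0 ≤ t k)
    (hdiv : ¬ Summable t) (ha : ∀ k, 0 ≤ a k) (hta : Summable fun k => t k * a k) :
    ∃ φ : ℕ → ℕ, StrictMono φ ∧ Tendsto (a ∘ φ) atTop (𝓝 0) := by
  have hfreq : ∀ ε > 0, ∃ᶠ k in atTop, a k < ε := by
    intro ε hε
    by_contra! hev
    obtain ⟨K, hK⟩ := eventually_atTop.1 hev
    refine hdiv ((summable_nat_add_iff K).1 <|
      ((summable_nat_add_iff K).2 (hta.div_const ε)).of_nonneg_of_le (fun k => ht _) fun k => ?_)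
    rw [le_div_iff₀ hε]
    exact mul_le_mul_of_nonneg_left (hK _ (Nat.le_add_left _ _)) (ht _)
  obtain ⟨φ, hφ, hφa⟩ :=
    extraction_forall_of_frequently fun n : ℕ => hfreq (1 / (n + 1)) Nat.one_div_pos_of_nat
  exact ⟨φ, hφ, squeeze_zero (fun n => ha _) (fun n => (hφa n).le)
    tendsto_one_div_add_atTop_nhds_zero_nat⟩

end Sequences

section Metric

variable {E : Type*} [SeminormedAddCommGroup E]

theorem norm_sub_sub_le_of_antitone {x : ℕ → E} {a : ℕ → ℝ} (ha : Antitone a)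
    (hstep : ∀ j, ‖x (j + 1) - x j‖ ≤ a j) {k l c : ℕ} (hlc : l ≤ c) (hck : c ≤ k) :
    ‖x k - x (k - l)‖ ≤ c * a (k - c) := by
  rw [← dist_eq_norm, dist_comm]
  calc dist (x (k - l)) (x k) ≤ ∑ j ∈ Finset.Ico (k - l) k, a j :=
        dist_le_Ico_sum_of_dist_le (Nat.sub_le k l) fun _ _ => by
          rw [dist_comm, dist_eq_norm]; exact hstep _
    _ ≤ (Finset.Ico (k - l) k).card • a (k - c) := Finset.sum_le_card_nsmul _ _ _ fun j hj =>
        ha ((Nat.sub_le_sub_left hlc k).trans (Finset.mem_Ico.1 hj).1)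
    _ = l * a (k - c) := by simp [Nat.sub_sub_self (hlc.trans hck)]
    _ ≤ c * a (k - c) := by
        gcongr
        exact (norm_nonneg _).trans (hstep _)

theorem isBounded_range_of_tendsto_norm_sub_sq {x : ℕ → E} {y : E} {L : ℝ}
    (hL : Tendsto (fun k => ‖x k - y‖ ^ 2) atTop (𝓝 L)) : Bornology.IsBounded (range x) := by
  obtain ⟨R, hR⟩ := hL.bddAbove_range
  refine (Metric.isBounded_closedBall (x := y) (r := √R)).subset ?_
  rintro _ ⟨k, rfl⟩
  rw [Metric.mem_closedBall, dist_eq_norm]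
  simpa using Real.abs_le_sqrt (hR ⟨k, rfl⟩)

theorem tendsto_of_tendsto_norm_sub_sq_of_subseq {x : ℕ → E} {y : E} {L : ℝ} {φ : ℕ → ℕ}
    (hL : Tendsto (fun k => ‖x k - y‖ ^ 2) atTop (𝓝 L)) (hφ : Tendsto φ atTop atTop)
    (hxφ : Tendsto (x ∘ φ) atTop (𝓝 y)) : Tendsto x atTop (𝓝 y) := by
  have h0 : Tendsto (fun k => ‖x (φ k) - y‖ ^ 2) atTop (𝓝 0) := by
    simpa using (tendsto_iff_norm_sub_tendsto_zero.1 hxφ).pow 2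
  obtain rfl : L = 0 := tendsto_nhds_unique (hL.comp hφ) h0
  rw [tendsto_iff_norm_sub_tendsto_zero]
  simpa [Real.sqrt_sq_eq_abs] using hL.sqrt

end Metric

theorem exists_minimizer_tendsto_subseq {E : Type*} [PseudoMetricSpace E] [ProperSpace E]
    {X : Set E} (hX : IsClosed X) {Φ : E → ℝ} (hΦ : Continuous Φ) {y : ℕ → E}
    (hy : ∀ k, y k ∈ X) (hbdd : Bornology.IsBounded (range y)) {μ : ℝ}
    (hμ : ∀ w ∈ X, μ ≤ Φ w) (hlim : Tendsto (fun k => Φ (y k)) atTop (𝓝 μ)) :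
    ∃ p ∈ X, (∀ w ∈ X, Φ p ≤ Φ w) ∧ ∃ ψ : ℕ → ℕ, StrictMono ψ ∧ Tendsto (y ∘ ψ) atTop (𝓝 p) := by
  obtain ⟨p, -, ψ, hψ, hyψ⟩ := tendsto_subseq_of_bounded hbdd fun k => mem_range_self k
  have hΦp : Φ p = μ :=
    tendsto_nhds_unique ((hΦ.tendsto p).comp hyψ) (hlim.comp hψ.tendsto_atTop)
  exact ⟨p, hX.mem_of_tendsto hyψ (Eventually.of_forall fun k => hy _),
    fun w hw => hΦp ▸ hμ w hw, ψ, hψ, hyψ⟩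

theorem ConvexOn.exists_strongDual_le {E : Type*} [NormedAddCommGroup E] [NormedSpace ℝ E]
    {f : E → ℝ} (hf : ConvexOn ℝ univ f) (hcont : Continuous f) (x₀ : E) :
    ∃ φ : StrongDual ℝ E, ∀ y, f x₀ + φ (y - x₀) ≤ f y := by
  -- separate `(x₀, f x₀)` from the open strict epigraph; the separating functional has a positive
  -- vertical component `β`, and `-φ₀ / β` is the slope of a supporting hyperplane
  have hopen : IsOpen {p : E × ℝ | p.1 ∈ univ ∧ f p.1 < p.2} := by
    simpa using isOpen_lt (hcont.comp continuous_fst) continuous_snd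
  obtain ⟨ℓ, hℓ⟩ :=
    geometric_hahn_banach_point_open hf.convex_strict_epigraph hopen (x := (x₀, f x₀)) (by simp)
  set φ₀ : StrongDual ℝ E := ℓ.comp (ContinuousLinearMap.inl ℝ E ℝ)
  set β := ℓ (0, 1)
  have hsplit : ∀ y r, ℓ (y, r) = φ₀ y + r * β := fun y r => by
    rw [show (y, r) = (y, (0 : ℝ)) + r • ((0 : E), (1 : ℝ)) by simp, map_add, map_smul]
    rfl
  have hsep : ∀ y r, f y < r → φ₀ x₀ + f x₀ * β < φ₀ y + r * β := fun y r hr => by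
    simpa only [hsplit] using hℓ (y, r) ⟨mem_univ y, hr⟩
  have hβ : 0 < β := by nlinarith [hsep x₀ (f x₀ + 1) (by linarith)]
  have hsupp : ∀ y, φ₀ x₀ + f x₀ * β ≤ φ₀ y + f y * β := fun y =>
    le_of_forall_pos_lt_add fun ε hε => by
      have := hsep y (f y + ε / β) (by linarith [div_pos hε hβ])
      rwa [add_mul, div_mul_cancel₀ _ hβ.ne', ← add_assoc] at this
  refine ⟨-β⁻¹ • φ₀, fun y => ?_⟩
  have hdiv : (φ₀ x₀ - φ₀ y) / β ≤ f y - f x₀ := by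
    rw [div_le_iff₀ hβ]
    linarith [hsupp y]
  calc f x₀ + (-β⁻¹ • φ₀) (y - x₀) = f x₀ + (φ₀ x₀ - φ₀ y) / β := by
        simp only [FunLike.coe_smul, Pi.smul_apply, map_sub, smul_eq_mul]
        ring
    _ ≤ f y := by linarith

section InnerProduct

variable {E : Type*} [NormedAddCommGroup E] [InnerProductSpace ℝ E]

def HasSubgradientAt (f : E → ℝ) (g x : E) : Prop :=
  ∀ y, f x + ⟪g, y - x⟫ ≤ f y

theorem ConvexOn.exists_hasSubgradientAt [FiniteDimensional ℝ E] {f : E → ℝ}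
    (hf : ConvexOn ℝ univ f) (x : E) : ∃ g, HasSubgradientAt f g x := by
  obtain ⟨φ, hφ⟩ := hf.exists_strongDual_le hf.locallyLipschitz.continuous x
  exact ⟨(InnerProductSpace.toDual ℝ E).symm φ, fun y => by
    simpa only [InnerProductSpace.toDual_symm_apply] using hφ y⟩

theorem ConvexOn.sub_le_mul_norm_sub [FiniteDimensional ℝ E] {f : E → ℝ}
    (hf : ConvexOn ℝ univ f) {x : E} {C : ℝ} (hC : ∀ g, HasSubgradientAt f g x → ‖g‖ ≤ C)
    (y : E) : f x - f y ≤ C * ‖x - y‖ := by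
  obtain ⟨g, hg⟩ := hf.exists_hasSubgradientAt x
  have hinner : ⟪g, x - y⟫ ≤ C * ‖x - y‖ :=
    (real_inner_le_norm _ _).trans (mul_le_mul_of_nonneg_right (hC g hg) (norm_nonneg _))
  have := hg y
  rw [← neg_sub x y, inner_neg_right] at this
  linarith

theorem HasSubgradientAt.sub_sub_le_inner {f : E → ℝ} {g x' x z : E} {C R : ℝ}
    (hg : HasSubgradientAt f g x') (hgC : ‖g‖ ≤ C) (hC : 0 ≤ C)
    (hf : f x - f x' ≤ C * ‖x - x'‖) (hR : ‖x - x'‖ ≤ R) :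
    f x - f z - 2 * C * R ≤ ⟪g, x - z⟫ := by
  have hnear : -(C * R) ≤ ⟪g, x - x'⟫ := by
    have := (abs_le.1 (abs_real_inner_le_norm g (x - x'))).1
    nlinarith [norm_nonneg g, norm_nonneg (x - x')]
  have hsub := hg z
  rw [← neg_sub x' z, inner_neg_right] at hsub
  have hsplit : ⟪g, x - z⟫ = ⟪g, x - x'⟫ + ⟪g, x' - z⟫ := by
    rw [← inner_add_right, sub_add_sub_cancel]
  nlinarith

theorem le_inner_sum_smul {ι : Type*} {s : Finset ι} {w : ι → ℝ} {G : ι → E} {u : E} {D : ℝ}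
    (hw0 : ∀ l ∈ s, 0 ≤ w l) (hw1 : ∑ l ∈ s, w l = 1) (hG : ∀ l ∈ s, D ≤ ⟪G l, u⟫) :
    D ≤ ⟪∑ l ∈ s, w l • G l, u⟫ := by
  rw [sum_inner]
  calc D = ∑ l ∈ s, w l * D := by rw [← Finset.sum_mul, hw1, one_mul]
    _ ≤ ∑ l ∈ s, ⟪w l • G l, u⟫ := Finset.sum_le_sum fun l hl => by
      rw [real_inner_smul_left]; exact mul_le_mul_of_nonneg_left (hG l hl) (hw0 l hl)

theorem norm_sum_smul_le {ι : Type*} {s : Finset ι} {w : ι → ℝ} {G : ι → E} {C : ℝ}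
    (hC : 0 ≤ C) (hw0 : ∀ l ∈ s, 0 ≤ w l) (hw1 : s.Nonempty → ∑ l ∈ s, w l = 1)
    (hG : ∀ l ∈ s, ‖G l‖ ≤ C) : ‖∑ l ∈ s, w l • G l‖ ≤ C := by
  rcases s.eq_empty_or_nonempty with rfl | hs
  · simpa using hC
  · simpa using (convex_closedBall (0 : E) C).sum_mem hw0 (hw1 hs) (by simpa using hG)

theorem norm_proj_sub_le {X : Set E} (hX : Convex ℝ X) {u p z : E} (hp : p ∈ X)
    (hmin : ∀ y ∈ X, ‖u - p‖ ≤ ‖u - y‖) (hz : z ∈ X) : ‖p - z‖ ≤ ‖u - z‖ := by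
  have : Nonempty X := ⟨⟨p, hp⟩⟩
  have hinf : ‖u - p‖ = ⨅ y : X, ‖u - y‖ :=
    le_antisymm (le_ciInf fun y => hmin y y.2)
      (ciInf_le (f := fun y : X => ‖u - y‖) ⟨0, by rintro _ ⟨y, rfl⟩; exact norm_nonneg _⟩
        ⟨p, hp⟩)
  have hvar := (norm_eq_iInf_iff_real_inner_le_zero hX hp).1 hinf z hz
  have hexp : ‖u - z‖ ^ 2 = ‖u - p‖ ^ 2 - 2 * ⟪u - p, z - p⟫ + ‖p - z‖ ^ 2 := by
    rw [← sub_add_sub_cancel u p z, norm_add_sq_real, ← neg_sub z p, inner_neg_right]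
    ring
  nlinarith [norm_nonneg (p - z), norm_nonneg (u - z), sq_nonneg ‖u - p‖]

theorem norm_proj_sub_smul_sub_sq_le {X : Set E} (hX : Convex ℝ X) {P : E → E}
    (hP : ∀ u, P u ∈ X ∧ ∀ y ∈ X, ‖u - P u‖ ≤ ‖u - y‖) (y v : E) (τ : ℝ) {z : E} (hz : z ∈ X) :
    ‖P (y - τ • v) - z‖ ^ 2 ≤ ‖y - z‖ ^ 2 - 2 * τ * ⟪v, y - z⟫ + τ ^ 2 * ‖v‖ ^ 2 := by
  calc _ ≤ ‖y - τ • v - z‖ ^ 2 := by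
        gcongr; exact norm_proj_sub_le hX (hP _).1 (hP _).2 hz
    _ = _ := by
        rw [sub_right_comm, norm_sub_sq_real, real_inner_smul_right, norm_smul, mul_pow,
          Real.norm_eq_abs, sq_abs, real_inner_comm]
        ring

theorem incremental_descent_inequality {ι : Type*} [Fintype ι] [FiniteDimensional ℝ E] {X : Set E}
    (hX : Convex ℝ X) {f : ι → E → ℝ} (hf : ∀ i, ConvexOn ℝ univ (f i)) {C : ℝ} (hC : 0 ≤ C)
    (hCbound : ∀ i, ∀ z ∈ X, ∀ g, HasSubgradientAt (f i) g z → ‖g‖ ≤ C) {P : E → E}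
    (hP : ∀ u, P u ∈ X ∧ ∀ y ∈ X, ‖u - P u‖ ≤ ‖u - y‖) {t : ℕ → ℝ} (ht : ∀ k, 0 ≤ t k)
    (hmono : Antitone t) {x : ℕ → E} (hx : ∀ k, x k ∈ X) {c : ℕ} {B : ℕ → ι → Finset ℕ}
    (hB : ∀ k i, ∀ l ∈ B k i, l ≤ c) {g : ι → ℕ → E}
    (hg : ∀ k i, ∀ l ∈ B k i, HasSubgradientAt (f i) (g i (k - l)) (x (k - l)))
    {α : ℕ → ι → ℕ → ℝ} (hα0 : ∀ k i l, 0 ≤ α k i l)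
    (hα1 : ∀ k i, (B k i).Nonempty → ∑ l ∈ B k i, α k i l = 1)
    (hupdate : ∀ k, x (k + 1) = P (x k - t k • ∑ i, ∑ l ∈ B k i, α k i l • g i (k - l)))
    (hfull : ∀ k, c ≤ k → ∀ i, (B k i).Nonempty) {z : E} (hz : z ∈ X) {k : ℕ} (hk : c ≤ k) :
    ‖x (k + 1) - z‖ ^ 2 ≤ ‖x k - z‖ ^ 2 - 2 * t k * (∑ i, f i (x k) - ∑ i, f i z)
      + (4 * c + 1) * (Fintype.card ι * C) ^ 2 * t (k - c) ^ 2 := by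
  set A := (Fintype.card ι : ℝ) * C with hA
  have hA0 : 0 ≤ A := by positivity
  set v := fun k => ∑ i, ∑ l ∈ B k i, α k i l • g i (k - l)
  have hgC : ∀ k i, ∀ l ∈ B k i, ‖g i (k - l)‖ ≤ C :=
    fun k i l hl => hCbound i _ (hx _) _ (hg k i l hl)
  have hv : ∀ k, ‖v k‖ ≤ A := fun k => (norm_sum_le _ _).trans <| by
    simpa [hA] using Finset.sum_le_sum fun i (_ : i ∈ Finset.univ) =>
      norm_sum_smul_le hC (fun l _ => hα0 k i l) (hα1 k i) (hgC k i)
  have hstep : ∀ j, ‖x (j + 1) - x j‖ ≤ A * t j := fun j => by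
    rw [hupdate j]
    refine (norm_proj_sub_le hX (hP _).1 (hP _).2 (hx j)).trans ?_
    rw [sub_sub_cancel_left, norm_neg, norm_smul, Real.norm_of_nonneg (ht j), mul_comm]
    exact mul_le_mul_of_nonneg_right (hv j) (ht j)
  set T := t (k - c)
  have hdelay : ∀ i, ∀ l ∈ B k i, ‖x k - x (k - l)‖ ≤ c * (A * T) := fun i l hl =>
    norm_sub_sub_le_of_antitone (hmono.const_mul hA0) hstep (hB k i l hl) hk
  have hinner : ∑ i, f i (x k) - ∑ i, f i z - Fintype.card ι * (2 * C * (c * (A * T)))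
      ≤ ⟪v k, x k - z⟫ := by
    rw [sum_inner]
    calc _ = ∑ i, (f i (x k) - f i z - 2 * C * (c * (A * T))) := by
          simp [Finset.sum_sub_distrib]
      _ ≤ _ := Finset.sum_le_sum fun i _ =>
          le_inner_sum_smul (fun l _ => hα0 k i l) (hα1 k i (hfull k hk i)) fun l hl =>
            (hg k i l hl).sub_sub_le_inner (hgC k i l hl) hC
              ((hf i).sub_le_mul_norm_sub (hCbound i _ (hx k)) _) (hdelay i l hl)
  have hproj := norm_proj_sub_smul_sub_sq_le hX hP (x k) (v k) (t k) hz
  rw [← hupdate k] at hproj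
  have htT : t k ≤ T := hmono (Nat.sub_le k c)
  have hlin := mul_le_mul_of_nonneg_left hinner (mul_nonneg zero_le_two (ht k))
  have hquad : t k ^ 2 * ‖v k‖ ^ 2 ≤ T ^ 2 * A ^ 2 := by
    gcongr
    exacts [ht k, hv k]
  have hcross : 2 * t k * (Fintype.card ι * (2 * C * (c * (A * T)))) ≤ 4 * c * A ^ 2 * T ^ 2 := by
    calc _ = 4 * c * A ^ 2 * (t k * T) := by rw [hA]; ring
      _ ≤ _ := by
        rw [sq T]
        gcongr
        exact ht _
  linarith

end InnerProduct

theorem incremental_cp_square_summable_convergence_general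
    (n m W : ℕ)
    (X : Set (EuclideanSpace ℝ (Fin n)))
    (hXclosed : IsClosed X) (hXconvex : Convex ℝ X)
    (f : Fin m → EuclideanSpace ℝ (Fin n) → ℝ)
    (hfconv : ∀ i, ConvexOn ℝ Set.univ (f i))
    (C : ℝ) (hC : 0 < C)
    -- every subgradient of any `f i` at any point of `X` has norm at most `C`
    (hCbound : ∀ i, ∀ z ∈ X, ∀ g : EuclideanSpace ℝ (Fin n),
      (∀ y, f i z + ⟪g, y - z⟫ ≤ f i y) → ‖g‖ ≤ C)
    -- `P` is the Euclidean projection onto `X`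
    (P : EuclideanSpace ℝ (Fin n) → EuclideanSpace ℝ (Fin n))
    (hP : ∀ u, P u ∈ X ∧ ∀ y ∈ X, ‖u - P u‖ ≤ ‖u - y‖)
    -- positive step sizes
    (t : ℕ → ℝ) (ht : ∀ k, 0 < t k)
    -- the iterates, lying in `X`
    (x : ℕ → EuclideanSpace ℝ (Fin n)) (hx : ∀ k, x k ∈ X)
    -- the index sets `B k i ⊆ {0, …, min k (W-1)}`
    (B : ℕ → Fin m → Finset ℕ)
    (hB : ∀ k i, ∀ l ∈ B k i, l ≤ min k (W - 1))
    -- `g i j` is a subgradient of `f i` at `x j` (used for `j = k - l`, `l ∈ B k i`)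
    (g : Fin m → ℕ → EuclideanSpace ℝ (Fin n))
    (hg : ∀ k i, ∀ l ∈ B k i, ∀ y,
      f i (x (k - l)) + ⟪g i (k - l), y - x (k - l)⟫ ≤ f i y)
    -- convex weights
    (α : ℕ → Fin m → ℕ → ℝ)
    (hα0 : ∀ k i l, 0 ≤ α k i l)
    (hα1 : ∀ k i, (B k i).Nonempty → ∑ l ∈ B k i, α k i l = 1)
    -- the update rule
    (hupdate : ∀ k, x (k + 1) =
      P (x k - t k • ∑ i : Fin m, ∑ l ∈ B k i, α k i l • g i (k - l)))    -- every component is evaluated at least once in every `W` iterations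
    (hfull : ∀ k, W - 1 ≤ k → ∀ i, (B k i).Nonempty)
    -- nonincreasing step sizes, divergent sum, square-summable
    (hmono : ∀ k, t (k + 1) ≤ t k)
    (hsum : Filter.Tendsto (fun N => ∑ k ∈ Finset.range N, t k)
      Filter.atTop Filter.atTop)
    (hsq : Summable (fun k => (t k) ^ 2))
    -- the set of optimal solutions is nonempty
    (hXstar : ∃ z ∈ X, ∀ w ∈ X, (∑ i : Fin m, f i z) ≤ ∑ i : Fin m, f i w) :
    ∃ xstar,
      xstar ∈ X ∧
      (∀ w ∈ X, (∑ i : Fin m, f i xstar) ≤ ∑ i : Fin m, f i w) ∧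
      Filter.Tendsto x Filter.atTop (nhds xstar) := by
  obtain ⟨z₀, hz₀, hz₀opt⟩ := hXstar
  have hdesc : ∀ z ∈ X, ∀ k, W - 1 ≤ k →
      ‖x (k + 1) - z‖ ^ 2 ≤ ‖x k - z‖ ^ 2 - 2 * t k * (∑ i, f i (x k) - ∑ i, f i z)
        + (4 * ((W - 1 : ℕ) : ℝ) + 1) * (Fintype.card (Fin m) * C) ^ 2 * t (k - (W - 1)) ^ 2 :=
    fun z hz k hk => incremental_descent_inequality hXconvex hfconv hC.le hCbound hP
      (fun k => (ht k).le) (antitone_nat_of_succ_le hmono) hx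
      (fun k i l hl => (hB k i l hl).trans (min_le_right _ _)) hg hα0 hα1 hupdate hfull hz hk
  have hsq' : Summable fun k => t (k - (W - 1)) ^ 2 :=
    (summable_nat_add_iff (W - 1)).1 (by simpa using hsq)
  have hfejer : ∀ z ∈ X, (∀ w ∈ X, ∑ i, f i z ≤ ∑ i, f i w) →
      (∃ L, Tendsto (fun k => ‖x k - z‖ ^ 2) atTop (𝓝 L)) ∧
        Summable fun k => 2 * t k * (∑ i, f i (x k) - ∑ i, f i z) := fun z hz hopt =>
    tendsto_and_summable_of_eventually_le_sub_add (d := fun k => ‖x k - z‖ ^ 2)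
      (q := fun k => 2 * t k * (∑ i, f i (x k) - ∑ i, f i z)) (fun k => sq_nonneg _)
      (fun k => mul_nonneg (by linarith [ht k]) (sub_nonneg.2 (hopt _ (hx k))))
      (hsq'.mul_left _) (eventually_atTop.2 ⟨W - 1, hdesc z hz⟩)
  obtain ⟨⟨L₀, hL₀⟩, hgap⟩ := hfejer z₀ hz₀ hz₀opt
  have hdiv : ¬ Summable fun k => 2 * t k := fun h => not_tendsto_atTop_of_tendsto_nhds
    ((summable_mul_left_iff two_ne_zero).1 h).hasSum.tendsto_sum_nat hsum
  obtain ⟨φ, hφ, hφgap⟩ := exists_strictMono_tendsto_zero_of_summable_mul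
    (fun k => by linarith [ht k]) hdiv (fun k => sub_nonneg.2 (hz₀opt _ (hx k))) hgap
  obtain ⟨p, hp, hpopt, ψ, hψ, hψlim⟩ := exists_minimizer_tendsto_subseq hXclosed
    (continuous_finsetSum _ fun i _ => (hfconv i).locallyLipschitz.continuous)
    (fun j => hx (φ j)) ((isBounded_range_of_tendsto_norm_sub_sq hL₀).subset
      (range_comp_subset_range φ x)) hz₀opt (tendsto_sub_nhds_zero_iff.1 hφgap)
  obtain ⟨L, hL⟩ := (hfejer p hp hpopt).1
  exact ⟨p, hp, hpopt, tendsto_of_tendsto_norm_sub_sq_of_subseq hL (hφ.comp hψ).tendsto_atTop hψlim⟩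

/-- Nonincreasing step sizes with `∑ t k = ∞` and
`∑ t k ² < ∞`, and nonempty solution set: the iterates converge to an optimal
solution. -/
theorem incremental_cp_square_summable_convergence
    (n m W : ℕ) (hW : 1 ≤ W)
    (X : Set (EuclideanSpace ℝ (Fin n)))
    (hXne : X.Nonempty) (hXclosed : IsClosed X) (hXconvex : Convex ℝ X)
    (f : Fin m → EuclideanSpace ℝ (Fin n) → ℝ)
    (hfconv : ∀ i, ConvexOn ℝ Set.univ (f i))
    (C : ℝ) (hC : 0 < C)
    -- every subgradient of any `f i` at any point of `X` has norm at most `C`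
    (hCbound : ∀ i, ∀ z ∈ X, ∀ g : EuclideanSpace ℝ (Fin n),
      (∀ y, f i z + ⟪g, y - z⟫ ≤ f i y) → ‖g‖ ≤ C)
    -- `P` is the Euclidean projection onto `X`
    (P : EuclideanSpace ℝ (Fin n) → EuclideanSpace ℝ (Fin n))
    (hP : ∀ u, P u ∈ X ∧ ∀ y ∈ X, ‖u - P u‖ ≤ ‖u - y‖)
    -- positive step sizes
    (t : ℕ → ℝ) (ht : ∀ k, 0 < t k)
    -- the iterates, lying in `X`
    (x : ℕ → EuclideanSpace ℝ (Fin n)) (hx : ∀ k, x k ∈ X)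
    -- the index sets `B k i ⊆ {0, …, min k (W-1)}`
    (B : ℕ → Fin m → Finset ℕ)
    (hB : ∀ k i, ∀ l ∈ B k i, l ≤ min k (W - 1))
    -- `g i j` is a subgradient of `f i` at `x j` (used for `j = k - l`, `l ∈ B k i`)
    (g : Fin m → ℕ → EuclideanSpace ℝ (Fin n))
    (hg : ∀ k i, ∀ l ∈ B k i, ∀ y,
      f i (x (k - l)) + ⟪g i (k - l), y - x (k - l)⟫ ≤ f i y)
    -- convex weights
    (α : ℕ → Fin m → ℕ → ℝ)
    (hα0 : ∀ k i l, 0 ≤ α k i l)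
    (hα1 : ∀ k i, (B k i).Nonempty → ∑ l ∈ B k i, α k i l = 1)
    (hα2 : ∀ k i, B k i = ∅ → ∀ l, α k i l = 0)
    -- the update rule
    (hupdate : ∀ k, x (k + 1) =
      P (x k - t k • ∑ i : Fin m, ∑ l ∈ B k i, α k i l • g i (k - l)))    -- every component is evaluated at least once in every `W` iterations
    (hfull : ∀ k, W - 1 ≤ k → ∀ i, (B k i).Nonempty)
    -- nonincreasing step sizes, divergent sum, square-summable
    (hmono : ∀ k, t (k + 1) ≤ t k)
    (hsum : Filter.Tendsto (fun N => ∑ k ∈ Finset.range N, t k)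
      Filter.atTop Filter.atTop)
    (hsq : Summable (fun k => (t k) ^ 2))
    -- the set of optimal solutions is nonempty
    (hXstar : ∃ z ∈ X, ∀ w ∈ X, (∑ i : Fin m, f i z) ≤ ∑ i : Fin m, f i w) :
    ∃ xstar,
      xstar ∈ X ∧
      (∀ w ∈ X, (∑ i : Fin m, f i xstar) ≤ ∑ i : Fin m, f i w) ∧
      Filter.Tendsto x Filter.atTop (nhds xstar) :=
  incremental_cp_square_summable_convergence_general n m W X hXclosed hXconvex f hfconv C hC hCbound
    P hP t ht x hx B hB g hg α hα0 hα1 hupdate hfull hmono hsum hsq hXstar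
end
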